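/- arXiv:2603.08890 — 11 statements merged into one kernel-verified Lean document; each statement's English description precedes it below -/
import Mathlib

section
/- Let d ≥ 1 and C > 0, let P, Q ⊆ [−C,C]^d be finite nonempty sets, let τ ∈ ℝ^d with ‖τ‖∞ ≤ 2C, let M be a real number with M > 8C, and set σ = (M, 0, …, 0) ∈ ℝ^d. Then δH(P+τ, Q) = δ→H((P ∪ (σ−Q)) + τ, Q ∪ (σ−P)), where σ−S denotes {σ−s : s∈S}. (This is the folklore reduction of the undirected Hausdorff distance under translation to the directed one.) -/
/-- Directed Hausdorff distance under the L∞ norm between subsets of ℝ^d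
(for finite nonempty sets this is `max_{x∈X} min_{y∈Y} ‖x−y‖∞`, since the
norm on `Fin d → ℝ` is the sup norm). -/
noncomputable def dirHaus {d : ℕ} (X Y : Set (Fin d → ℝ)) : ℝ :=
  sSup ((fun x => sInf ((fun y => ‖x - y‖) '' Y)) '' X)

/-- Undirected Hausdorff distance under the L∞ norm. -/
noncomputable def undirHaus {d : ℕ} (X Y : Set (Fin d → ℝ)) : ℝ :=
  max (dirHaus X Y) (dirHaus Y X)

private lemma myNormLe {d : ℕ} (v : Fin d → ℝ) (c : ℝ) (hc : 0 ≤ c)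
    (h : ∀ r, |v r| ≤ c) : ‖v‖ ≤ c := by
  rw [pi_norm_le_iff_of_nonneg hc]; intro i; simpa [Real.norm_eq_abs] using h i

private lemma myCoordLe {d : ℕ} (v : Fin d → ℝ) (i : Fin d) : |v i| ≤ ‖v‖ := by
  simpa [Real.norm_eq_abs] using norm_le_pi_norm v i

private lemma mySInfUnion (S T : Set ℝ) (hSf : S.Finite) (hTf : T.Finite)
    (hSne : S.Nonempty) (hTne : T.Nonempty) (b : ℝ)
    (hS : ∀ s ∈ S, s ≤ b) (hT : ∀ t ∈ T, b ≤ t) :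
    sInf (S ∪ T) = sInf S := by
  rw [csInf_union hSf.bddBelow hSne hTf.bddBelow hTne]
  obtain ⟨s, hs⟩ := hSne
  exact min_eq_left (le_trans (le_trans (csInf_le hSf.bddBelow hs) (hS s hs))
    (le_csInf hTne hT))

/-- Folklore reduction of the undirected Hausdorff distance under translation
to the directed one: with σ = (M,0,…,0) and M > 8C,
δH(P+τ, Q) = δ→H((P ∪ (σ−Q)) + τ, Q ∪ (σ−P)). -/
theorem stmt1 (d : ℕ) (hd : 1 ≤ d) (C : ℝ) (hC : 0 < C)
    (P Q : Set (Fin d → ℝ))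
    (hPfin : P.Finite) (hQfin : Q.Finite) (hPne : P.Nonempty) (hQne : Q.Nonempty)
    (hPC : ∀ p ∈ P, ∀ r, |p r| ≤ C) (hQC : ∀ q ∈ Q, ∀ r, |q r| ≤ C)
    (τ : Fin d → ℝ) (hτ : ‖τ‖ ≤ 2 * C)
    (M : ℝ) (hM : 8 * C < M)
    (σ : Fin d → ℝ) (hσ : σ = fun r : Fin d => if r.val = 0 then M else 0) :
    undirHaus ((fun p => p + τ) '' P) Q =
      dirHaus ((fun p => p + τ) '' (P ∪ (fun q => σ - q) '' Q))
        (Q ∪ (fun p => σ - p) '' P) := by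
  set i0 : Fin d := ⟨0, hd⟩ with hi0
  have hσ0 : σ i0 = M := by rw [hσ]; simp [hi0]
  have hτC : ∀ r, |τ r| ≤ 2 * C := fun r => le_trans (myCoordLe τ r) hτ
  -- near bound: a, b within the box, then ‖(a+τ)-b‖ ≤ 4C
  have hnear : ∀ a b : Fin d → ℝ, (∀ r, |a r| ≤ C) → (∀ r, |b r| ≤ C) →
      ‖(a + τ) - b‖ ≤ 4 * C := by
    intro a b ha hb
    have h1 : ‖a‖ ≤ C := myNormLe a C hC.le ha
    have h2 : ‖b‖ ≤ C := myNormLe b C hC.le hb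
    have h3 := norm_sub_le (a + τ) b
    have h4 := norm_add_le a τ
    linarith
  -- far bound: ‖(a+τ) - (σ - b)‖ ≥ M - 4C
  have hfar : ∀ a b : Fin d → ℝ, (∀ r, |a r| ≤ C) → (∀ r, |b r| ≤ C) →
      M - 4 * C ≤ ‖(a + τ) - (σ - b)‖ := by
    intro a b ha hb
    have hcoord : ((a + τ) - (σ - b)) i0 = a i0 + τ i0 - M + b i0 := by
      simp [hσ0]; ring
    have h1 := abs_le.mp (ha i0)
    have h2 := abs_le.mp (hb i0)
    have h3 := abs_le.mp (hτC i0)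
    have h4 : M - 4 * C ≤ -((a + τ) - (σ - b)) i0 := by rw [hcoord]; linarith
    exact le_trans (le_trans h4 (neg_le_abs _)) (myCoordLe _ i0)
  -- far bound, mirrored: ‖((σ - a) + τ) - b‖ ≥ M - 4C
  have hfar2 : ∀ a b : Fin d → ℝ, (∀ r, |a r| ≤ C) → (∀ r, |b r| ≤ C) →
      M - 4 * C ≤ ‖((σ - a) + τ) - b‖ := by
    intro a b ha hb
    have hcoord : (((σ - a) + τ) - b) i0 = M - a i0 + τ i0 - b i0 := by
      simp [hσ0]
    have h1 := abs_le.mp (ha i0)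
    have h2 := abs_le.mp (hb i0)
    have h3 := abs_le.mp (hτC i0)
    have h4 : M - 4 * C ≤ (((σ - a) + τ) - b) i0 := by rw [hcoord]; linarith
    exact le_trans (le_trans h4 (le_abs_self _)) (myCoordLe _ i0)
  have h4M : 4 * C ≤ M - 4 * C := by linarith
  -- key1: for p ∈ P, the inf over the union is the inf over Q
  have key1 : ∀ p ∈ P,
      sInf ((fun y => ‖(p + τ) - y‖) '' (Q ∪ (fun p => σ - p) '' P)) =
      sInf ((fun y => ‖(p + τ) - y‖) '' Q) := by
    intro p hp
    rw [Set.image_union]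
    apply mySInfUnion _ _ (hQfin.image _) ((hPfin.image _).image _)
      (hQne.image _) ((hPne.image _).image _) (4 * C)
    · rintro s ⟨q, hq, rfl⟩
      exact hnear p q (hPC p hp) (hQC q hq)
    · rintro t ⟨y, ⟨p', hp', rfl⟩, rfl⟩
      exact le_trans h4M (hfar p p' (hPC p hp) (hPC p' hp'))
  -- key2: for q ∈ Q, the inf over the union (at point σ-q+τ) is inf over P+τ at q
  have key2 : ∀ q ∈ Q,
      sInf ((fun y => ‖((σ - q) + τ) - y‖) '' (Q ∪ (fun p => σ - p) '' P)) =
      sInf ((fun y => ‖q - y‖) '' ((fun p => p + τ) '' P)) := by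
    intro q hq
    rw [Set.image_union, Set.union_comm]
    have heq : (fun y => ‖((σ - q) + τ) - y‖) '' ((fun p => σ - p) '' P) =
        (fun y => ‖q - y‖) '' ((fun p => p + τ) '' P) := by
      rw [Set.image_image, Set.image_image]
      apply Set.image_congr
      intro p _
      have : ((σ - q) + τ) - (σ - p) = -(q - (p + τ)) := by ring
      rw [this, norm_neg]
    rw [heq]
    apply mySInfUnion _ _ ((hPfin.image _).image _) (hQfin.image _)
      ((hPne.image _).image _) (hQne.image _) (4 * C)
    · rintro s ⟨y, ⟨p, hp, rfl⟩, rfl⟩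
      show ‖q - (p + τ)‖ ≤ 4 * C
      have h : q - (p + τ) = -((p + τ) - q) := by ring
      rw [h, norm_neg]
      exact hnear p q (hPC p hp) (hQC q hq)
    · rintro t ⟨q', hq', rfl⟩
      exact le_trans h4M (hfar2 q q' (hQC q hq) (hQC q' hq'))
  -- now the main computation
  unfold undirHaus dirHaus
  rw [Set.image_union, Set.image_union]
  have hA : (fun x => sInf ((fun y => ‖x - y‖) '' (Q ∪ (fun p => σ - p) '' P))) ''
        ((fun p => p + τ) '' P) =
      (fun x => sInf ((fun y => ‖x - y‖) '' Q)) '' ((fun p => p + τ) '' P) := by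
    rw [Set.image_image, Set.image_image]
    exact Set.image_congr key1
  have hB : (fun x => sInf ((fun y => ‖x - y‖) '' (Q ∪ (fun p => σ - p) '' P))) ''
        ((fun p => p + τ) '' ((fun q => σ - q) '' Q)) =
      (fun x => sInf ((fun y => ‖x - y‖) '' ((fun p => p + τ) '' P))) '' Q := by
    rw [Set.image_image, Set.image_image]
    exact Set.image_congr key2
  rw [hA, hB]
  rw [csSup_union (((hPfin.image _).image _).bddAbove) ((hPne.image _).image _)
    ((hQfin.image _).bddAbove) (hQne.image _)]
end

section
/- Let d ≥ 1, let δ ≥ 0, let P, Q ⊆ ℝ^d be finite nonempty sets, and let τ ∈ ℝ^d with ‖τ‖∞ ≤ δ. Then δ→H(P+τ, Q) ≤ δ if and only if δH((P ∪ Q)+τ, Q) ≤ δ. In particular, if the set of admissible translations is restricted to [−δ,δ]^d, the directed Hausdorff-under-translation decision problem for (P,Q) is equivalent to the undirected one for (P∪Q, Q). -/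
lemma dirHaus_le_iff {d : ℕ} {X Y : Set (Fin d → ℝ)} (hX : X.Finite)
    (hXne : X.Nonempty) {δ : ℝ} :
    dirHaus X Y ≤ δ ↔ ∀ x ∈ X, sInf ((fun y => ‖x - y‖) '' Y) ≤ δ := by
  unfold dirHaus
  rw [csSup_le_iff ((hX.image _).bddAbove) (hXne.image _)]
  simp [Set.forall_mem_image]

lemma sInf_le_of_mem {d : ℕ} {Y : Set (Fin d → ℝ)} {x y : Fin d → ℝ} (hy : y ∈ Y)
    {δ : ℝ} (h : ‖x - y‖ ≤ δ) : sInf ((fun y => ‖x - y‖) '' Y) ≤ δ := by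
  refine le_trans (csInf_le ⟨0, ?_⟩ (Set.mem_image_of_mem _ hy)) h
  rintro z ⟨w, -, rfl⟩
  exact norm_nonneg _

/-- For translations τ with ‖τ‖∞ ≤ δ, we have
δ→H(P+τ, Q) ≤ δ iff δH((P ∪ Q)+τ, Q) ≤ δ. -/
theorem stmt2 (d : ℕ) (hd : 1 ≤ d) (δ : ℝ) (hδ : 0 ≤ δ)
    (P Q : Set (Fin d → ℝ))
    (hPfin : P.Finite) (hQfin : Q.Finite) (hPne : P.Nonempty) (hQne : Q.Nonempty)
    (τ : Fin d → ℝ) (hτ : ‖τ‖ ≤ δ) :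
    dirHaus ((fun p => p + τ) '' P) Q ≤ δ ↔
      undirHaus ((fun p => p + τ) '' (P ∪ Q)) Q ≤ δ := by
  have hPQfin : (P ∪ Q).Finite := hPfin.union hQfin
  rw [dirHaus_le_iff (hPfin.image _) (hPne.image _)]
  rw [undirHaus, max_le_iff,
    dirHaus_le_iff ((hPQfin.image _)) ((hPne.mono Set.subset_union_left).image _),
    dirHaus_le_iff hQfin hQne]
  constructor
  · intro h
    constructor
    · rintro x ⟨p, hp | hq, rfl⟩
      · exact h _ ⟨p, hp, rfl⟩
      · refine sInf_le_of_mem hq ?_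
        simpa using hτ
    · intro q hq
      refine sInf_le_of_mem (Y := (fun p => p + τ) '' (P ∪ Q))
        (Set.mem_image_of_mem _ (Set.mem_union_right _ hq)) ?_
      simpa using hτ
  · rintro ⟨h1, -⟩ x ⟨p, hp, rfl⟩
    exact h1 _ ⟨p, Set.mem_union_left _ hp, rfl⟩
end

section
/- Let d ≥ 1, let P ⊆ ℝ^d be a finite nonempty set, and let 𝓑 be a finite nonempty family of closed axis-parallel boxes in ℝ^d, each of the form B = ∏_{ℓ=1}^d [a_ℓ(B), b_ℓ(B)] with a_ℓ(B) ≤ b_ℓ(B). Then there exists τ ∈ ℝ^d such that for every p ∈ P there is B ∈ 𝓑 with p + τ ∈ B, if and only if there exists τ' ∈ ℝ^{2d} such that for every sign vector ε ∈ {+,−}^d and every p ∈ P there is B ∈ 𝓑 with f(p) + τ' ∈ f_ε(B). (Reduction of the Translation Problem with Boxes in dimension d to the Translation Problem with Orthants in dimension 2d.) -/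
/-- The diagonal embedding f : ℝ^d → ℝ^{2d}, (f(x))_{2ℓ} = (f(x))_{2ℓ+1} = x_ℓ
(0-indexed coordinates). -/
def fdiag {d : ℕ} (x : Fin d → ℝ) : Fin (2 * d) → ℝ :=
  fun j => x ⟨j.val / 2, by have := j.isLt; omega⟩

/-- The (0-indexed) coordinate 2ℓ of ℝ^{2d}. -/
def idx0 {d : ℕ} (ℓ : Fin d) : Fin (2 * d) := ⟨2 * ℓ.val, by have := ℓ.isLt; omega⟩

/-- The (0-indexed) coordinate 2ℓ+1 of ℝ^{2d}. -/
def idx1 {d : ℕ} (ℓ : Fin d) : Fin (2 * d) := ⟨2 * ℓ.val + 1, by have := ℓ.isLt; omega⟩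

/-- Membership of y ∈ ℝ^{2d} in the orthant f_ε(B) for the box
B = ∏_ℓ [a ℓ, b ℓ] and sign vector ε (`true` = "+", `false` = "−"). -/
def inOrthant {d : ℕ} (a b : Fin d → ℝ) (ε : Fin d → Bool) (y : Fin (2 * d) → ℝ) : Prop :=
  ∀ ℓ : Fin d,
    if ε ℓ = true then a ℓ ≤ y (idx0 ℓ) ∧ y (idx1 ℓ) ≤ b ℓ
    else y (idx0 ℓ) ≤ b ℓ ∧ a ℓ ≤ y (idx1 ℓ)

lemma fdiag_idx0 {d : ℕ} (x : Fin d → ℝ) (ℓ : Fin d) : fdiag x (idx0 ℓ) = x ℓ := by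
  simp only [fdiag, idx0]
  congr 1
  exact Fin.ext (show 2 * ℓ.val / 2 = ℓ.val by omega)

lemma fdiag_idx1 {d : ℕ} (x : Fin d → ℝ) (ℓ : Fin d) : fdiag x (idx1 ℓ) = x ℓ := by
  simp only [fdiag, idx1]
  congr 1
  exact Fin.ext (show (2 * ℓ.val + 1) / 2 = ℓ.val by omega)

/-- Reduction of the Translation Problem with Boxes in dimension d to the
Translation Problem with Orthants in dimension 2d. -/
theorem stmt3 (d : ℕ) (hd : 1 ≤ d)
    (P : Set (Fin d → ℝ)) (hPfin : P.Finite) (hPne : P.Nonempty)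
    (ℬ : Set ((Fin d → ℝ) × (Fin d → ℝ))) (hBfin : ℬ.Finite) (hBne : ℬ.Nonempty)
    (hBbox : ∀ B ∈ ℬ, ∀ ℓ, B.1 ℓ ≤ B.2 ℓ) :
    (∃ τ : Fin d → ℝ, ∀ p ∈ P, ∃ B ∈ ℬ,
        ∀ ℓ, B.1 ℓ ≤ p ℓ + τ ℓ ∧ p ℓ + τ ℓ ≤ B.2 ℓ) ↔
    (∃ τ' : Fin (2 * d) → ℝ, ∀ ε : Fin d → Bool, ∀ p ∈ P, ∃ B ∈ ℬ,
        inOrthant B.1 B.2 ε (fdiag p + τ')) := by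
  constructor
  · rintro ⟨τ, hτ⟩
    refine ⟨fdiag τ, fun ε p hp => ?_⟩
    obtain ⟨B, hB, hBp⟩ := hτ p hp
    refine ⟨B, hB, fun ℓ => ?_⟩
    obtain ⟨h1, h2⟩ := hBp ℓ
    simp only [Pi.add_apply, fdiag_idx0, fdiag_idx1]
    split
    exacts [⟨h1, h2⟩, ⟨h2, h1⟩]
  · rintro ⟨τ', hτ'⟩
    refine ⟨fun ℓ => min (τ' (idx0 ℓ)) (τ' (idx1 ℓ)), fun p hp => ?_⟩
    obtain ⟨B, hB, hBo⟩ := hτ' (fun ℓ => decide (τ' (idx0 ℓ) ≤ τ' (idx1 ℓ))) p hp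
    refine ⟨B, hB, fun ℓ => ?_⟩
    have h := hBo ℓ
    simp only [Pi.add_apply, fdiag_idx0, fdiag_idx1, decide_eq_true_eq] at h
    dsimp only
    by_cases hc : τ' (idx0 ℓ) ≤ τ' (idx1 ℓ)
    · rw [if_pos hc] at h
      rw [show min (τ' (idx0 ℓ)) (τ' (idx1 ℓ)) = τ' (idx0 ℓ) from min_eq_left hc]
      exact ⟨h.1, le_trans (by linarith) h.2⟩
    · rw [if_neg hc] at h
      rw [show min (τ' (idx0 ℓ)) (τ' (idx1 ℓ)) = τ' (idx1 ℓ) from min_eq_right (le_of_not_ge hc)]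
      exact ⟨h.2, le_trans (by linarith [le_of_not_ge hc]) h.1⟩
end

section
/- Let d ≥ 1 and let τ' ∈ ℝ^{2d}. Define τ* ∈ ℝ^d by τ*_ℓ = (τ'_{2ℓ−1} + τ'_{2ℓ})/2, and define ε ∈ {+,−}^d by ε_ℓ = + if τ'_{2ℓ−1} ≤ τ'_{2ℓ} and ε_ℓ = − otherwise. Then for every p ∈ ℝ^d and every axis-parallel box B = ∏_{ℓ=1}^d [a_ℓ, b_ℓ] with a_ℓ ≤ b_ℓ: if f(p) + τ' ∈ f_ε(B), then f(p) + f(τ*) ∈ f_ε(B). (Projecting a feasible translation onto the diagonal f(ℝ^d) preserves feasibility for this choice of sign vector.) -/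
/-- Projecting a feasible translation τ' onto the diagonal f(ℝ^d) preserves
feasibility, for the sign vector ε determined by τ'. -/
theorem stmt5 (d : ℕ) (hd : 1 ≤ d) (τ' : Fin (2 * d) → ℝ)
    (τstar : Fin d → ℝ) (hτstar : ∀ ℓ, τstar ℓ = (τ' (idx0 ℓ) + τ' (idx1 ℓ)) / 2)
    (ε : Fin d → Bool) (hε : ∀ ℓ, ε ℓ = true ↔ τ' (idx0 ℓ) ≤ τ' (idx1 ℓ))
    (p : Fin d → ℝ) (a b : Fin d → ℝ) (hab : ∀ ℓ, a ℓ ≤ b ℓ)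
    (h : inOrthant a b ε (fdiag p + τ')) :
    inOrthant a b ε (fdiag p + fdiag τstar) := by
  intro ℓ
  have h := h ℓ
  have e0 : ∀ x : Fin d → ℝ, fdiag x (idx0 ℓ) = x ℓ := by
    intro x; unfold fdiag; congr 1; apply Fin.ext; simp [idx0]
  have e1 : ∀ x : Fin d → ℝ, fdiag x (idx1 ℓ) = x ℓ := by
    intro x; unfold fdiag; congr 1; apply Fin.ext; simp [idx1]; omega
  have hts := hτstar ℓ
  by_cases hc : ε ℓ = true
  · have ht := (hε ℓ).mp hc
    simp only [hc, if_true, Pi.add_apply, e0, e1] at h ⊢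
    constructor <;> rw [hts] <;> linarith [h.1, h.2]
  · have ht := not_le.mp (fun hle => hc ((hε ℓ).mpr hle))
    simp only [hc, if_false, Pi.add_apply, e0, e1] at h ⊢
    constructor <;> rw [hts] <;> linarith [h.1, h.2]
end

section
/- Let d ≥ 1 and L ≥ 1. For each i ∈ {1,…,L}, let 𝓑_i be a finite nonempty family of closed axis-parallel boxes, each contained in [0,1/2]^d. Let 𝒮 be a finite set of pairs (i,t) with i ∈ {1,…,L} and t ∈ [0,1/2]^d, such that every index i ∈ {1,…,L} appears in at least one pair of 𝒮. For i ∈ {1,…,L}, let u_i = (10·i, 0, …, 0) ∈ ℝ^d. Define P = {u_i − t : (i,t) ∈ 𝒮} and 𝒬 = {B + u_i : i ∈ {1,…,L}, B ∈ 𝓑_i}, where B + u denotes the translate of the box B by u. Then for every τ ∈ ℝ^d: (for every (i,t) ∈ 𝒮 there is B ∈ 𝓑_i with τ ∈ B + t) if and only if (for every p ∈ P there is B' ∈ 𝒬 with p + τ ∈ B'). (Correctness of the reduction from the Translated Box-Shape Problem to the Translation Problem with Boxes.) -/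
/-- Correctness of the reduction from the Translated Box-Shape Problem to the
Translation Problem with Boxes. Shapes `ℬ i` are finite nonempty families of
boxes (given by their corner pairs) contained in [0,1/2]^d; `𝒮` is a finite set
of translation objects (i,t); `u i = (10·(i+1), 0, …, 0)` spatially separates
the shapes (indices i are 0-based, corresponding to 1,…,L). With
P = {u i − t : (i,t) ∈ 𝒮} and 𝒬 = {B + u i : B ∈ ℬ i}, a translation τ lies in
all translated shapes iff it moves every point of P into some box of 𝒬. -/
theorem stmt6 (d L : ℕ) (hd : 1 ≤ d) (hL : 1 ≤ L)
    (ℬ : Fin L → Set ((Fin d → ℝ) × (Fin d → ℝ)))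
    (hBfin : ∀ i, (ℬ i).Finite) (hBne : ∀ i, (ℬ i).Nonempty)
    (hBbox : ∀ i, ∀ B ∈ ℬ i, ∀ r, 0 ≤ B.1 r ∧ B.1 r ≤ B.2 r ∧ B.2 r ≤ 1 / 2)
    (𝒮 : Set (Fin L × (Fin d → ℝ))) (h𝒮fin : 𝒮.Finite)
    (h𝒮t : ∀ s ∈ 𝒮, ∀ r, 0 ≤ s.2 r ∧ s.2 r ≤ 1 / 2)
    (h𝒮cov : ∀ i : Fin L, ∃ t, (i, t) ∈ 𝒮)
    (u : Fin L → (Fin d → ℝ))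
    (hu : ∀ i r, u i r = if r.val = 0 then 10 * ((i : ℕ) + 1) else 0)
    (τ : Fin d → ℝ) :
    (∀ s ∈ 𝒮, ∃ B ∈ ℬ s.1, ∀ r, B.1 r + s.2 r ≤ τ r ∧ τ r ≤ B.2 r + s.2 r) ↔
    (∀ s ∈ 𝒮, ∃ i : Fin L, ∃ B ∈ ℬ i, ∀ r,
        B.1 r + u i r ≤ (u s.1 r - s.2 r) + τ r ∧
        (u s.1 r - s.2 r) + τ r ≤ B.2 r + u i r) := by
  set r0 : Fin d := ⟨0, hd⟩ with hr0def
  constructor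
  · intro h s hs
    obtain ⟨B, hB, hBτ⟩ := h s hs
    exact ⟨s.1, B, hB, fun r =>
      ⟨by linarith [(hBτ r).1], by linarith [(hBτ r).2]⟩⟩
  · intro h s hs
    -- bound lemma: any witness (i', B') for s' ∈ 𝒮 pins down τ 0 near 10*(i' - s'.1)
    have bound : ∀ s' ∈ 𝒮, ∀ i' : Fin L, ∀ B' ∈ ℬ i',
        (∀ r, B'.1 r + u i' r ≤ (u s'.1 r - s'.2 r) + τ r ∧
          (u s'.1 r - s'.2 r) + τ r ≤ B'.2 r + u i' r) →
        10 * ((i' : ℕ) : ℝ) - 10 * ((s'.1 : ℕ) : ℝ) ≤ τ r0 ∧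
        τ r0 ≤ 10 * ((i' : ℕ) : ℝ) - 10 * ((s'.1 : ℕ) : ℝ) + 1 := by
      intro s' hs' i' B' hB' hτ'
      have h1 := hτ' r0
      have h2 := hBbox i' B' hB' r0
      have h3 := h𝒮t s' hs' r0
      rw [hu i' r0, hu s'.1 r0] at h1
      simp only [hr0def, if_true] at h1
      push_cast at h1
      exact ⟨by linarith [h1.1, h2.1, h3.1], by linarith [h1.2, h2.2.2, h3.2]⟩
    have step : ∀ a b : ℤ, 10 * (a : ℝ) ≤ τ r0 → τ r0 ≤ 10 * (b : ℝ) + 1 →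
        a ≤ b := by
      intro a b h1 h2
      by_contra hc
      push_neg at hc
      have : (b : ℝ) + 1 ≤ (a : ℝ) := by exact_mod_cast hc
      linarith
    obtain ⟨i, B, hB, hτ⟩ := h s hs
    have hbs := bound s hs i B hB hτ
    obtain ⟨t0, ht0⟩ := h𝒮cov ⟨0, hL⟩
    obtain ⟨i0, B0, hB0, hτ0⟩ := h ⟨⟨0, hL⟩, t0⟩ ht0
    have hb0 := bound ⟨⟨0, hL⟩, t0⟩ ht0 i0 B0 hB0 hτ0
    have hLpos : L - 1 < L := Nat.sub_lt hL one_pos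
    obtain ⟨t1, ht1⟩ := h𝒮cov ⟨L - 1, hLpos⟩
    obtain ⟨i1, B1, hB1, hτ1⟩ := h ⟨⟨L - 1, hLpos⟩, t1⟩ ht1
    have hb1 := bound ⟨⟨L - 1, hLpos⟩, t1⟩ ht1 i1 B1 hB1 hτ1
    -- recast bounds with integer parameters
    have a1 : (10 : ℝ) * (((i : ℤ) - (s.1 : ℤ) : ℤ) : ℝ) ≤ τ r0 := by
      push_cast; linarith [hbs.1]
    have a2 : τ r0 ≤ (10 : ℝ) * (((i : ℤ) - (s.1 : ℤ) : ℤ) : ℝ) + 1 := by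
      push_cast; linarith [hbs.2]
    have b1 : (10 : ℝ) * (((i0 : ℤ) : ℤ) : ℝ) ≤ τ r0 := by
      have := hb0.1; simp only [Fin.val_mk] at this; push_cast; push_cast at this
      linarith
    have b2 : τ r0 ≤ (10 : ℝ) * (((i0 : ℤ) : ℤ) : ℝ) + 1 := by
      have := hb0.2; simp only [Fin.val_mk] at this; push_cast; push_cast at this
      linarith
    have c1 : (10 : ℝ) * (((i1 : ℤ) - ((L - 1 : ℕ) : ℤ) : ℤ) : ℝ) ≤ τ r0 := by
      have := hb1.1; simp only [Fin.val_mk] at this; push_cast; push_cast at this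
      linarith
    have c2 : τ r0 ≤ (10 : ℝ) * (((i1 : ℤ) - ((L - 1 : ℕ) : ℤ) : ℤ) : ℝ) + 1 := by
      have := hb1.2; simp only [Fin.val_mk] at this; push_cast; push_cast at this
      linarith
    have e1 : ((i : ℤ) - (s.1 : ℤ)) = (i0 : ℤ) :=
      le_antisymm (step _ _ a1 b2) (step _ _ b1 a2)
    have e2 : ((i : ℤ) - (s.1 : ℤ)) = (i1 : ℤ) - ((L - 1 : ℕ) : ℤ) :=
      le_antisymm (step _ _ a1 c2) (step _ _ c1 a2)
    have hi1L : (i1 : ℕ) < L := i1.2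
    have hival : i = s.1 := by
      apply Fin.ext
      omega
    rw [hival] at hB hτ
    refine ⟨B, hB, fun r => ?_⟩
    have hr := hτ r
    exact ⟨by linarith [hr.1], by linarith [hr.2]⟩
end

section
/- Let t ≥ 1 be an integer and consider the ground set G consisting of 9t pairwise distinct elements x_1,…,x_{3t}, y_1,…,y_{3t}, z_1,…,z_{3t}. Define three sequences, each of length 4t: s₁ = (x_1, x_2, …, x_{3t}, y_{3t}, y_{3t−1}, …, y_{2t+1}), s₂ = (y_1, y_2, …, y_{3t}, z_{3t}, z_{3t−1}, …, z_{2t+1}), s₃ = (z_1, z_2, …, z_{3t}, x_{3t}, x_{3t−1}, …, x_{2t+1}). Then for every 3-element subset e ⊆ G there exist integers i, j, ℓ ∈ {0, 1, …, 4t} such that: (1) min(i,j,ℓ) + max(i,j,ℓ) ≤ 4t; (2) i + j + ℓ ≤ 6t + 1; and (3) e is contained in the union of the first i elements of s₁, the first j elements of s₂, and the first ℓ elements of s₃. (Existence of prefix covering designs for 3-uniform hypercliques; with k = 9t, the bounds read min+max ≤ 4k/9 and i+j+ℓ ≤ 2k/3+1.) -/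
/-- The ground set of 9t pairwise distinct elements: `(0, i)` is x_{i+1},
`(1, i)` is y_{i+1}, `(2, i)` is z_{i+1} (0-based indices i < 3t). -/
abbrev Ground (t : ℕ) := Fin 3 × Fin (3 * t)

/-- The sequence s₁ = (x_1, …, x_{3t}, y_{3t}, y_{3t−1}, …, y_{2t+1}),
0-indexed: position a < 3t holds x_{a+1}; position a ≥ 3t holds y_{6t−a}. -/
def seq1 (t : ℕ) (a : Fin (4 * t)) : Ground t :=
  if h : (a : ℕ) < 3 * t then (0, ⟨a, h⟩)
  else (1, ⟨6 * t - 1 - a, by have := a.isLt; omega⟩)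

/-- The sequence s₂ = (y_1, …, y_{3t}, z_{3t}, z_{3t−1}, …, z_{2t+1}). -/
def seq2 (t : ℕ) (a : Fin (4 * t)) : Ground t :=
  if h : (a : ℕ) < 3 * t then (1, ⟨a, h⟩)
  else (2, ⟨6 * t - 1 - a, by have := a.isLt; omega⟩)

/-- The sequence s₃ = (z_1, …, z_{3t}, x_{3t}, x_{3t−1}, …, x_{2t+1}). -/
def seq3 (t : ℕ) (a : Fin (4 * t)) : Ground t :=
  if h : (a : ℕ) < 3 * t then (2, ⟨a, h⟩)
  else (0, ⟨6 * t - 1 - a, by have := a.isLt; omega⟩)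

lemma covP1 (t : ℕ) (r : Fin (3*t)) (i : ℕ) (h : (r:ℕ)+1 ≤ i) :
    ∃ a : Fin (4*t), (a:ℕ) < i ∧ seq1 t a = ((0, r) : Ground t) := by
  have hr := r.isLt
  refine ⟨⟨r, by omega⟩, by simp only [Fin.val_mk]; omega, ?_⟩
  simp [seq1, hr]

lemma covP2 (t : ℕ) (r : Fin (3*t)) (i : ℕ) (h : (r:ℕ)+1 ≤ i) :
    ∃ a : Fin (4*t), (a:ℕ) < i ∧ seq2 t a = ((1, r) : Ground t) := by
  have hr := r.isLt
  refine ⟨⟨r, by omega⟩, by simp only [Fin.val_mk]; omega, ?_⟩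
  simp [seq2, hr]

lemma covP3 (t : ℕ) (r : Fin (3*t)) (i : ℕ) (h : (r:ℕ)+1 ≤ i) :
    ∃ a : Fin (4*t), (a:ℕ) < i ∧ seq3 t a = ((2, r) : Ground t) := by
  have hr := r.isLt
  refine ⟨⟨r, by omega⟩, by simp only [Fin.val_mk]; omega, ?_⟩
  simp [seq3, hr]

lemma covA1 (t : ℕ) (r : Fin (3*t)) (i : ℕ) (h2 : 2*t ≤ (r:ℕ)) (h : 6*t - r ≤ i) :
    ∃ a : Fin (4*t), (a:ℕ) < i ∧ seq1 t a = ((1, r) : Ground t) := by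
  have hr := r.isLt
  refine ⟨⟨6*t - 1 - r, by omega⟩, by simp only [Fin.val_mk]; omega, ?_⟩
  have hn : ¬ ((6*t - 1 - (r:ℕ)) < 3*t) := by omega
  simp only [seq1, hn, dif_neg]
  refine Prod.ext rfl (Fin.ext ?_)
  simp
  omega

lemma covA2 (t : ℕ) (r : Fin (3*t)) (i : ℕ) (h2 : 2*t ≤ (r:ℕ)) (h : 6*t - r ≤ i) :
    ∃ a : Fin (4*t), (a:ℕ) < i ∧ seq2 t a = ((2, r) : Ground t) := by
  have hr := r.isLt
  refine ⟨⟨6*t - 1 - r, by omega⟩, by simp only [Fin.val_mk]; omega, ?_⟩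
  have hn : ¬ ((6*t - 1 - (r:ℕ)) < 3*t) := by omega
  simp only [seq2, hn, dif_neg]
  refine Prod.ext rfl (Fin.ext ?_)
  simp
  omega

lemma covA3 (t : ℕ) (r : Fin (3*t)) (i : ℕ) (h2 : 2*t ≤ (r:ℕ)) (h : 6*t - r ≤ i) :
    ∃ a : Fin (4*t), (a:ℕ) < i ∧ seq3 t a = ((0, r) : Ground t) := by
  have hr := r.isLt
  refine ⟨⟨6*t - 1 - r, by omega⟩, by simp only [Fin.val_mk]; omega, ?_⟩
  have hn : ¬ ((6*t - 1 - (r:ℕ)) < 3*t) := by omega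
  simp only [seq3, hn, dif_neg]
  refine Prod.ext rfl (Fin.ext ?_)
  simp
  omega

lemma covAny (t : ℕ) (g : Ground t) (i j ℓ : ℕ)
    (h : (g.1 = 0 ∧ (g.2:ℕ)+1 ≤ i) ∨ (g.1 = 1 ∧ (g.2:ℕ)+1 ≤ j) ∨ (g.1 = 2 ∧ (g.2:ℕ)+1 ≤ ℓ)) :
    (∃ a : Fin (4 * t), (a : ℕ) < i ∧ seq1 t a = g) ∨
    (∃ a : Fin (4 * t), (a : ℕ) < j ∧ seq2 t a = g) ∨
    (∃ a : Fin (4 * t), (a : ℕ) < ℓ ∧ seq3 t a = g) := by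
  obtain ⟨c, r⟩ := g
  rcases h with ⟨hc, hr⟩ | ⟨hc, hr⟩ | ⟨hc, hr⟩ <;> simp only at hc <;> subst hc
  · exact Or.inl (covP1 t r i hr)
  · exact Or.inr (Or.inl (covP2 t r j hr))
  · exact Or.inr (Or.inr (covP3 t r ℓ hr))

lemma caseC (t : ℕ) (x y z : Fin (3*t)) :
    ∃ i j ℓ : ℕ, i ≤ 4 * t ∧ j ≤ 4 * t ∧ ℓ ≤ 4 * t ∧
      min i (min j ℓ) + max i (max j ℓ) ≤ 4 * t ∧
      i + j + ℓ ≤ 6 * t + 1 ∧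
      ∀ g : Ground t, (g = (0,x) ∨ g = (1,y) ∨ g = (2,z)) →
        (∃ a : Fin (4 * t), (a : ℕ) < i ∧ seq1 t a = g) ∨
        (∃ a : Fin (4 * t), (a : ℕ) < j ∧ seq2 t a = g) ∨
        (∃ a : Fin (4 * t), (a : ℕ) < ℓ ∧ seq3 t a = g) := by
  have hx := x.isLt; have hy := y.isLt; have hz := z.isLt
  rcases (show ((x:ℕ) < 2*t ∧ (y:ℕ) < 2*t ∧ (z:ℕ) < 2*t) ∨
      ((y:ℕ) ≤ x ∧ (z:ℕ) ≤ x ∧ 2*t ≤ x) ∨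
      ((x:ℕ) ≤ y ∧ (z:ℕ) ≤ y ∧ 2*t ≤ y) ∨
      ((x:ℕ) ≤ z ∧ (y:ℕ) ≤ z ∧ 2*t ≤ z) by omega) with h | h | h | h
  · refine ⟨(x:ℕ)+1, (y:ℕ)+1, (z:ℕ)+1, by omega, by omega, by omega, by omega, by omega, ?_⟩
    rintro g (rfl | rfl | rfl)
    · exact Or.inl (covP1 t x _ le_rfl)
    · exact Or.inr (Or.inl (covP2 t y _ le_rfl))
    · exact Or.inr (Or.inr (covP3 t z _ le_rfl))
  · refine ⟨0, (y:ℕ)+1, max ((z:ℕ)+1) (6*t - x), by omega, by omega, by omega, by omega, by omega, ?_⟩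
    rintro g (rfl | rfl | rfl)
    · exact Or.inr (Or.inr (covA3 t x _ h.2.2 (le_max_right _ _)))
    · exact Or.inr (Or.inl (covP2 t y _ le_rfl))
    · exact Or.inr (Or.inr (covP3 t z _ (le_max_left _ _)))
  · refine ⟨max ((x:ℕ)+1) (6*t - y), 0, (z:ℕ)+1, by omega, by omega, by omega, by omega, by omega, ?_⟩
    rintro g (rfl | rfl | rfl)
    · exact Or.inl (covP1 t x _ (le_max_left _ _))
    · exact Or.inl (covA1 t y _ h.2.2 (le_max_right _ _))
    · exact Or.inr (Or.inr (covP3 t z _ le_rfl))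
  · refine ⟨(x:ℕ)+1, max ((y:ℕ)+1) (6*t - z), 0, by omega, by omega, by omega, by omega, by omega, ?_⟩
    rintro g (rfl | rfl | rfl)
    · exact Or.inl (covP1 t x _ le_rfl)
    · exact Or.inr (Or.inl (covP2 t y _ (le_max_left _ _)))
    · exact Or.inr (Or.inl (covA2 t z _ h.2.2 (le_max_right _ _)))

lemma primAllE (t : ℕ) (c1 c2 c3 : Fin 3) (r1 r2 r3 : Fin (3*t))
    (hA : c1 = c2 ∨ c1 = c3 ∨ c2 = c3) (e : Finset (Ground t))
    (hmem : ∀ g ∈ e, g = (c1,r1) ∨ g = (c2,r2) ∨ g = (c3,r3)) :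
    ∃ i j ℓ : ℕ, i ≤ 4 * t ∧ j ≤ 4 * t ∧ ℓ ≤ 4 * t ∧
      min i (min j ℓ) + max i (max j ℓ) ≤ 4 * t ∧
      i + j + ℓ ≤ 6 * t + 1 ∧
      ∀ g ∈ e,
        (∃ a : Fin (4 * t), (a : ℕ) < i ∧ seq1 t a = g) ∨
        (∃ a : Fin (4 * t), (a : ℕ) < j ∧ seq2 t a = g) ∨
        (∃ a : Fin (4 * t), (a : ℕ) < ℓ ∧ seq3 t a = g) := by
  have h1 := r1.isLt; have h2 := r2.isLt; have h3 := r3.isLt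
  fin_cases c1 <;> fin_cases c2 <;> fin_cases c3
  · refine ⟨max ((r1:ℕ)+1) (max ((r2:ℕ)+1) ((r3:ℕ)+1)), 0, 0, by omega, by omega, by omega, by omega, by omega, ?_⟩
    intro g hg
    rcases hmem g hg with rfl | rfl | rfl
    · exact covAny t _ _ _ _ (Or.inl ⟨rfl, by dsimp only; omega⟩)
    · exact covAny t _ _ _ _ (Or.inl ⟨rfl, by dsimp only; omega⟩)
    · exact covAny t _ _ _ _ (Or.inl ⟨rfl, by dsimp only; omega⟩)
  · refine ⟨max ((r1:ℕ)+1) ((r2:ℕ)+1), (r3:ℕ)+1, 0, by omega, by omega, by omega, by omega, by omega, ?_⟩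
    intro g hg
    rcases hmem g hg with rfl | rfl | rfl
    · exact covAny t _ _ _ _ (Or.inl ⟨rfl, by dsimp only; omega⟩)
    · exact covAny t _ _ _ _ (Or.inl ⟨rfl, by dsimp only; omega⟩)
    · exact covAny t _ _ _ _ (Or.inr (Or.inl ⟨rfl, by dsimp only; omega⟩))
  · refine ⟨max ((r1:ℕ)+1) ((r2:ℕ)+1), 0, (r3:ℕ)+1, by omega, by omega, by omega, by omega, by omega, ?_⟩
    intro g hg
    rcases hmem g hg with rfl | rfl | rfl
    · exact covAny t _ _ _ _ (Or.inl ⟨rfl, by dsimp only; omega⟩)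
    · exact covAny t _ _ _ _ (Or.inl ⟨rfl, by dsimp only; omega⟩)
    · exact covAny t _ _ _ _ (Or.inr (Or.inr ⟨rfl, by dsimp only; omega⟩))
  · refine ⟨max ((r1:ℕ)+1) ((r3:ℕ)+1), (r2:ℕ)+1, 0, by omega, by omega, by omega, by omega, by omega, ?_⟩
    intro g hg
    rcases hmem g hg with rfl | rfl | rfl
    · exact covAny t _ _ _ _ (Or.inl ⟨rfl, by dsimp only; omega⟩)
    · exact covAny t _ _ _ _ (Or.inr (Or.inl ⟨rfl, by dsimp only; omega⟩))
    · exact covAny t _ _ _ _ (Or.inl ⟨rfl, by dsimp only; omega⟩)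
  · refine ⟨(r1:ℕ)+1, max ((r2:ℕ)+1) ((r3:ℕ)+1), 0, by omega, by omega, by omega, by omega, by omega, ?_⟩
    intro g hg
    rcases hmem g hg with rfl | rfl | rfl
    · exact covAny t _ _ _ _ (Or.inl ⟨rfl, by dsimp only; omega⟩)
    · exact covAny t _ _ _ _ (Or.inr (Or.inl ⟨rfl, by dsimp only; omega⟩))
    · exact covAny t _ _ _ _ (Or.inr (Or.inl ⟨rfl, by dsimp only; omega⟩))
  · exact absurd hA (by decide)
  · refine ⟨max ((r1:ℕ)+1) ((r3:ℕ)+1), 0, (r2:ℕ)+1, by omega, by omega, by omega, by omega, by omega, ?_⟩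
    intro g hg
    rcases hmem g hg with rfl | rfl | rfl
    · exact covAny t _ _ _ _ (Or.inl ⟨rfl, by dsimp only; omega⟩)
    · exact covAny t _ _ _ _ (Or.inr (Or.inr ⟨rfl, by dsimp only; omega⟩))
    · exact covAny t _ _ _ _ (Or.inl ⟨rfl, by dsimp only; omega⟩)
  · exact absurd hA (by decide)
  · refine ⟨(r1:ℕ)+1, 0, max ((r2:ℕ)+1) ((r3:ℕ)+1), by omega, by omega, by omega, by omega, by omega, ?_⟩
    intro g hg
    rcases hmem g hg with rfl | rfl | rfl
    · exact covAny t _ _ _ _ (Or.inl ⟨rfl, by dsimp only; omega⟩)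
    · exact covAny t _ _ _ _ (Or.inr (Or.inr ⟨rfl, by dsimp only; omega⟩))
    · exact covAny t _ _ _ _ (Or.inr (Or.inr ⟨rfl, by dsimp only; omega⟩))
  · refine ⟨max ((r2:ℕ)+1) ((r3:ℕ)+1), (r1:ℕ)+1, 0, by omega, by omega, by omega, by omega, by omega, ?_⟩
    intro g hg
    rcases hmem g hg with rfl | rfl | rfl
    · exact covAny t _ _ _ _ (Or.inr (Or.inl ⟨rfl, by dsimp only; omega⟩))
    · exact covAny t _ _ _ _ (Or.inl ⟨rfl, by dsimp only; omega⟩)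
    · exact covAny t _ _ _ _ (Or.inl ⟨rfl, by dsimp only; omega⟩)
  · refine ⟨(r2:ℕ)+1, max ((r1:ℕ)+1) ((r3:ℕ)+1), 0, by omega, by omega, by omega, by omega, by omega, ?_⟩
    intro g hg
    rcases hmem g hg with rfl | rfl | rfl
    · exact covAny t _ _ _ _ (Or.inr (Or.inl ⟨rfl, by dsimp only; omega⟩))
    · exact covAny t _ _ _ _ (Or.inl ⟨rfl, by dsimp only; omega⟩)
    · exact covAny t _ _ _ _ (Or.inr (Or.inl ⟨rfl, by dsimp only; omega⟩))
  · exact absurd hA (by decide)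
  · refine ⟨(r3:ℕ)+1, max ((r1:ℕ)+1) ((r2:ℕ)+1), 0, by omega, by omega, by omega, by omega, by omega, ?_⟩
    intro g hg
    rcases hmem g hg with rfl | rfl | rfl
    · exact covAny t _ _ _ _ (Or.inr (Or.inl ⟨rfl, by dsimp only; omega⟩))
    · exact covAny t _ _ _ _ (Or.inr (Or.inl ⟨rfl, by dsimp only; omega⟩))
    · exact covAny t _ _ _ _ (Or.inl ⟨rfl, by dsimp only; omega⟩)
  · refine ⟨0, max ((r1:ℕ)+1) (max ((r2:ℕ)+1) ((r3:ℕ)+1)), 0, by omega, by omega, by omega, by omega, by omega, ?_⟩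
    intro g hg
    rcases hmem g hg with rfl | rfl | rfl
    · exact covAny t _ _ _ _ (Or.inr (Or.inl ⟨rfl, by dsimp only; omega⟩))
    · exact covAny t _ _ _ _ (Or.inr (Or.inl ⟨rfl, by dsimp only; omega⟩))
    · exact covAny t _ _ _ _ (Or.inr (Or.inl ⟨rfl, by dsimp only; omega⟩))
  · refine ⟨0, max ((r1:ℕ)+1) ((r2:ℕ)+1), (r3:ℕ)+1, by omega, by omega, by omega, by omega, by omega, ?_⟩
    intro g hg
    rcases hmem g hg with rfl | rfl | rfl
    · exact covAny t _ _ _ _ (Or.inr (Or.inl ⟨rfl, by dsimp only; omega⟩))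
    · exact covAny t _ _ _ _ (Or.inr (Or.inl ⟨rfl, by dsimp only; omega⟩))
    · exact covAny t _ _ _ _ (Or.inr (Or.inr ⟨rfl, by dsimp only; omega⟩))
  · exact absurd hA (by decide)
  · refine ⟨0, max ((r1:ℕ)+1) ((r3:ℕ)+1), (r2:ℕ)+1, by omega, by omega, by omega, by omega, by omega, ?_⟩
    intro g hg
    rcases hmem g hg with rfl | rfl | rfl
    · exact covAny t _ _ _ _ (Or.inr (Or.inl ⟨rfl, by dsimp only; omega⟩))
    · exact covAny t _ _ _ _ (Or.inr (Or.inr ⟨rfl, by dsimp only; omega⟩))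
    · exact covAny t _ _ _ _ (Or.inr (Or.inl ⟨rfl, by dsimp only; omega⟩))
  · refine ⟨0, (r1:ℕ)+1, max ((r2:ℕ)+1) ((r3:ℕ)+1), by omega, by omega, by omega, by omega, by omega, ?_⟩
    intro g hg
    rcases hmem g hg with rfl | rfl | rfl
    · exact covAny t _ _ _ _ (Or.inr (Or.inl ⟨rfl, by dsimp only; omega⟩))
    · exact covAny t _ _ _ _ (Or.inr (Or.inr ⟨rfl, by dsimp only; omega⟩))
    · exact covAny t _ _ _ _ (Or.inr (Or.inr ⟨rfl, by dsimp only; omega⟩))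
  · refine ⟨max ((r2:ℕ)+1) ((r3:ℕ)+1), 0, (r1:ℕ)+1, by omega, by omega, by omega, by omega, by omega, ?_⟩
    intro g hg
    rcases hmem g hg with rfl | rfl | rfl
    · exact covAny t _ _ _ _ (Or.inr (Or.inr ⟨rfl, by dsimp only; omega⟩))
    · exact covAny t _ _ _ _ (Or.inl ⟨rfl, by dsimp only; omega⟩)
    · exact covAny t _ _ _ _ (Or.inl ⟨rfl, by dsimp only; omega⟩)
  · exact absurd hA (by decide)
  · refine ⟨(r2:ℕ)+1, 0, max ((r1:ℕ)+1) ((r3:ℕ)+1), by omega, by omega, by omega, by omega, by omega, ?_⟩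
    intro g hg
    rcases hmem g hg with rfl | rfl | rfl
    · exact covAny t _ _ _ _ (Or.inr (Or.inr ⟨rfl, by dsimp only; omega⟩))
    · exact covAny t _ _ _ _ (Or.inl ⟨rfl, by dsimp only; omega⟩)
    · exact covAny t _ _ _ _ (Or.inr (Or.inr ⟨rfl, by dsimp only; omega⟩))
  · exact absurd hA (by decide)
  · refine ⟨0, max ((r2:ℕ)+1) ((r3:ℕ)+1), (r1:ℕ)+1, by omega, by omega, by omega, by omega, by omega, ?_⟩
    intro g hg
    rcases hmem g hg with rfl | rfl | rfl
    · exact covAny t _ _ _ _ (Or.inr (Or.inr ⟨rfl, by dsimp only; omega⟩))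
    · exact covAny t _ _ _ _ (Or.inr (Or.inl ⟨rfl, by dsimp only; omega⟩))
    · exact covAny t _ _ _ _ (Or.inr (Or.inl ⟨rfl, by dsimp only; omega⟩))
  · refine ⟨0, (r2:ℕ)+1, max ((r1:ℕ)+1) ((r3:ℕ)+1), by omega, by omega, by omega, by omega, by omega, ?_⟩
    intro g hg
    rcases hmem g hg with rfl | rfl | rfl
    · exact covAny t _ _ _ _ (Or.inr (Or.inr ⟨rfl, by dsimp only; omega⟩))
    · exact covAny t _ _ _ _ (Or.inr (Or.inl ⟨rfl, by dsimp only; omega⟩))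
    · exact covAny t _ _ _ _ (Or.inr (Or.inr ⟨rfl, by dsimp only; omega⟩))
  · refine ⟨(r3:ℕ)+1, 0, max ((r1:ℕ)+1) ((r2:ℕ)+1), by omega, by omega, by omega, by omega, by omega, ?_⟩
    intro g hg
    rcases hmem g hg with rfl | rfl | rfl
    · exact covAny t _ _ _ _ (Or.inr (Or.inr ⟨rfl, by dsimp only; omega⟩))
    · exact covAny t _ _ _ _ (Or.inr (Or.inr ⟨rfl, by dsimp only; omega⟩))
    · exact covAny t _ _ _ _ (Or.inl ⟨rfl, by dsimp only; omega⟩)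
  · refine ⟨0, (r3:ℕ)+1, max ((r1:ℕ)+1) ((r2:ℕ)+1), by omega, by omega, by omega, by omega, by omega, ?_⟩
    intro g hg
    rcases hmem g hg with rfl | rfl | rfl
    · exact covAny t _ _ _ _ (Or.inr (Or.inr ⟨rfl, by dsimp only; omega⟩))
    · exact covAny t _ _ _ _ (Or.inr (Or.inr ⟨rfl, by dsimp only; omega⟩))
    · exact covAny t _ _ _ _ (Or.inr (Or.inl ⟨rfl, by dsimp only; omega⟩))
  · refine ⟨0, 0, max ((r1:ℕ)+1) (max ((r2:ℕ)+1) ((r3:ℕ)+1)), by omega, by omega, by omega, by omega, by omega, ?_⟩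
    intro g hg
    rcases hmem g hg with rfl | rfl | rfl
    · exact covAny t _ _ _ _ (Or.inr (Or.inr ⟨rfl, by dsimp only; omega⟩))
    · exact covAny t _ _ _ _ (Or.inr (Or.inr ⟨rfl, by dsimp only; omega⟩))
    · exact covAny t _ _ _ _ (Or.inr (Or.inr ⟨rfl, by dsimp only; omega⟩))

lemma plumb (t : ℕ) (x y z : Fin (3*t)) (e : Finset (Ground t))
    (hmem : ∀ g ∈ e, g = ((0:Fin 3),x) ∨ g = ((1:Fin 3),y) ∨ g = ((2:Fin 3),z)) :
    ∃ i j ℓ : ℕ, i ≤ 4 * t ∧ j ≤ 4 * t ∧ ℓ ≤ 4 * t ∧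
      min i (min j ℓ) + max i (max j ℓ) ≤ 4 * t ∧
      i + j + ℓ ≤ 6 * t + 1 ∧
      ∀ g ∈ e,
        (∃ a : Fin (4 * t), (a : ℕ) < i ∧ seq1 t a = g) ∨
        (∃ a : Fin (4 * t), (a : ℕ) < j ∧ seq2 t a = g) ∨
        (∃ a : Fin (4 * t), (a : ℕ) < ℓ ∧ seq3 t a = g) := by
  obtain ⟨i,j,ℓ,a1,a2,a3,a4,a5,hcov⟩ := caseC t x y z
  exact ⟨i,j,ℓ,a1,a2,a3,a4,a5, fun g hg => hcov g (hmem g hg)⟩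

/-- Existence of prefix covering designs for 3-uniform hypercliques: every
3-element subset e of the ground set is covered by prefixes of lengths i, j, ℓ
of s₁, s₂, s₃ with min+max ≤ 4t and i+j+ℓ ≤ 6t+1. -/
theorem stmt7 (t : ℕ) (ht : 1 ≤ t) (e : Finset (Ground t)) (he : e.card = 3) :
    ∃ i j ℓ : ℕ, i ≤ 4 * t ∧ j ≤ 4 * t ∧ ℓ ≤ 4 * t ∧
      min i (min j ℓ) + max i (max j ℓ) ≤ 4 * t ∧
      i + j + ℓ ≤ 6 * t + 1 ∧
      ∀ g ∈ e,
        (∃ a : Fin (4 * t), (a : ℕ) < i ∧ seq1 t a = g) ∨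
        (∃ a : Fin (4 * t), (a : ℕ) < j ∧ seq2 t a = g) ∨
        (∃ a : Fin (4 * t), (a : ℕ) < ℓ ∧ seq3 t a = g) := by
  obtain ⟨g1, g2, g3, h12, h13, h23, rfl⟩ := Finset.card_eq_three.mp he
  obtain ⟨c1,r1⟩ := g1; obtain ⟨c2,r2⟩ := g2; obtain ⟨c3,r3⟩ := g3
  have hmem : ∀ g ∈ ({(c1,r1),(c2,r2),(c3,r3)} : Finset (Ground t)),
      g = (c1,r1) ∨ g = (c2,r2) ∨ g = (c3,r3) := by
    intro g hg
    simpa [Finset.mem_insert, Finset.mem_singleton] using hg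
  by_cases hA : c1 = c2 ∨ c1 = c3 ∨ c2 = c3
  · exact primAllE t c1 c2 c3 r1 r2 r3 hA _ hmem
  · push_neg at hA
    obtain ⟨n12, n13, n23⟩ := hA
    clear h12 h13 h23 he
    fin_cases c1 <;> fin_cases c2 <;> fin_cases c3
    · exact absurd rfl n12
    · exact absurd rfl n12
    · exact absurd rfl n12
    · exact absurd rfl n13
    · exact absurd rfl n23
    · exact plumb t r1 r2 r3 _ (fun g hg => by
          rcases hmem g hg with rfl|rfl|rfl
          · exact Or.inl rfl
          · exact Or.inr (Or.inl rfl)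
          · exact Or.inr (Or.inr rfl))
    · exact absurd rfl n13
    · exact plumb t r1 r3 r2 _ (fun g hg => by
          rcases hmem g hg with rfl|rfl|rfl
          · exact Or.inl rfl
          · exact Or.inr (Or.inr rfl)
          · exact Or.inr (Or.inl rfl))
    · exact absurd rfl n23
    · exact absurd rfl n23
    · exact absurd rfl n13
    · exact plumb t r2 r1 r3 _ (fun g hg => by
          rcases hmem g hg with rfl|rfl|rfl
          · exact Or.inr (Or.inl rfl)
          · exact Or.inl rfl
          · exact Or.inr (Or.inr rfl))
    · exact absurd rfl n12
    · exact absurd rfl n12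
    · exact absurd rfl n12
    · exact plumb t r3 r1 r2 _ (fun g hg => by
          rcases hmem g hg with rfl|rfl|rfl
          · exact Or.inr (Or.inl rfl)
          · exact Or.inr (Or.inr rfl)
          · exact Or.inl rfl)
    · exact absurd rfl n13
    · exact absurd rfl n23
    · exact absurd rfl n23
    · exact plumb t r2 r3 r1 _ (fun g hg => by
          rcases hmem g hg with rfl|rfl|rfl
          · exact Or.inr (Or.inr rfl)
          · exact Or.inl rfl
          · exact Or.inr (Or.inl rfl))
    · exact absurd rfl n13
    · exact plumb t r3 r2 r1 _ (fun g hg => by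
          rcases hmem g hg with rfl|rfl|rfl
          · exact Or.inr (Or.inr rfl)
          · exact Or.inr (Or.inl rfl)
          · exact Or.inl rfl)
    · exact absurd rfl n23
    · exact absurd rfl n13
    · exact absurd rfl n12
    · exact absurd rfl n12
    · exact absurd rfl n12
end

section
/- Let 1 ≤ n ≤ m be integers, let A : {1,…,n} → ℝ and B : {1,…,m} → ℝ be nondecreasing, let X = max over all entries of A and B of their absolute values, and let M be a real number with M ≥ 10·n·m·(X+1). Then inf_{τ ∈ ℝ} max_{1≤i≤n} min_{1≤j≤m} | (A(i) + i·M + τ) − (B(j) + j·M) | = inf_{s ∈ {0,1,…,m−n}} inf_{c ∈ ℝ} max_{1≤i≤n} | (A(i) + c) − B(i+s) |. (Correctness of the reduction from the Linear Alignment problem to the one-dimensional directed Hausdorff distance under translation: with P = {A(i)+iM : 1≤i≤n} and Q = {B(j)+jM : 1≤j≤m}, the optimal directed Hausdorff distance of P to Q under translation equals the optimal Linear Alignment value.) -/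
/-!
Lifting the entries by the staircase `i ↦ i * M` with `M > 8 X` separates the scales: a point
`A i + i * M + τ` can be within `2 X` of `B j + j * M` only if `τ` lies within `4 X < M / 2` of
`(j - i) * M`, and only one integer multiple of `M` is that close to `τ`. So if the directed
Hausdorff cost of `τ` is below `2 X`, every `i` is matched with `i + s` for one common shift `s`,
which is an alignment with offset `τ - s * M` of no larger cost; otherwise the alignment
`s = 0, c = 0`, of cost at most `2 X`, already does as well. Conversely the alignment `(s, c)` is
realised by the translation `c + s * M`.
-/

open Finset

theorem Int.eq_of_abs_sub_mul_lt_half {M τ : ℝ} (hM : 0 < M) {k l : ℤ}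
    (hk : |τ - k * M| < M / 2) (hl : |τ - l * M| < M / 2) : k = l := by
  have hkl : |((k - l : ℤ) : ℝ)| * M < 1 * M := by
    calc |((k - l : ℤ) : ℝ)| * M = |(τ - l * M) - (τ - k * M)| := by
          rw [← abs_of_pos hM, ← abs_mul, abs_of_pos hM]; push_cast; ring_nf
      _ ≤ |τ - l * M| + |τ - k * M| := abs_sub _ _
      _ < 1 * M := by linarith
  have : |((k - l : ℤ) : ℝ)| < 1 := (mul_lt_mul_iff_of_pos_right hM).mp hkl
  exact sub_eq_zero.mp (Int.abs_lt_one_iff.mp (by exact_mod_cast this))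

noncomputable def hausdorffCost {n m : ℕ} (hn : 1 ≤ n) (hnm : n ≤ m) (P Q : ℕ → ℝ) (τ : ℝ) : ℝ :=
  (Icc 1 n).sup' (nonempty_Icc.mpr hn) fun i =>
    (Icc 1 m).inf' (nonempty_Icc.mpr (hn.trans hnm)) fun j => |(P i + τ) - Q j|

noncomputable def alignmentCost {n : ℕ} (hn : 1 ≤ n) (A B : ℕ → ℝ) (s : ℕ) (c : ℝ) : ℝ :=
  (Icc 1 n).sup' (nonempty_Icc.mpr hn) fun i => |(A i + c) - B (i + s)|

section Staircase

variable {n m : ℕ} {A B : ℕ → ℝ} {M X : ℝ}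

theorem hausdorffCost_le_alignmentCost (hn : 1 ≤ n) (hnm : n ≤ m) {s : ℕ} (hs : s ≤ m - n)
    (c : ℝ) :
    hausdorffCost hn hnm (fun i => A i + i * M) (fun j => B j + j * M) (c + s * M) ≤
      alignmentCost hn A B s c := by
  refine sup'_le _ _ fun i hi => ?_
  have hi' := mem_Icc.mp hi
  refine inf'_le_of_le _ (b := i + s) (mem_Icc.mpr ⟨by omega, by omega⟩) ?_
  refine le_of_eq_of_le ?_ (le_sup' (fun i => |(A i + c) - B (i + s)|) hi)
  congr 1; push_cast; ring

theorem alignmentCost_zero_le (hn : 1 ≤ n) (hnm : n ≤ m)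
    (hXA : ∀ i, 1 ≤ i → i ≤ n → |A i| ≤ X) (hXB : ∀ j, 1 ≤ j → j ≤ m → |B j| ≤ X) :
    alignmentCost hn A B 0 0 ≤ 2 * X := by
  refine sup'_le _ _ fun i hi => ?_
  have hi' := mem_Icc.mp hi
  calc |(A i + 0) - B (i + 0)| ≤ |A i| + |B i| := by simpa using abs_sub (A i) (B i)
    _ ≤ 2 * X := by linarith [hXA i hi'.1 hi'.2, hXB i hi'.1 (hi'.2.trans hnm)]

theorem shift_eq_of_abs_lt (hM : 8 * X < M) (hXA : ∀ i, 1 ≤ i → i ≤ n → |A i| ≤ X)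
    (hXB : ∀ j, 1 ≤ j → j ≤ m → |B j| ≤ X) {τ : ℝ} {i j i' j' : ℕ}
    (hi : i ∈ Icc 1 n) (hj : j ∈ Icc 1 m) (hi' : i' ∈ Icc 1 n) (hj' : j' ∈ Icc 1 m)
    (h : |(A i + i * M + τ) - (B j + j * M)| < 2 * X)
    (h' : |(A i' + i' * M + τ) - (B j' + j' * M)| < 2 * X) :
    (j : ℤ) - i = j' - i' := by
  have near {i j : ℕ} (hi : i ∈ Icc 1 n) (hj : j ∈ Icc 1 m)
      (h : |(A i + i * M + τ) - (B j + j * M)| < 2 * X) :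
      |τ - (((j : ℤ) - i : ℤ) : ℝ) * M| < M / 2 := by
    have hi := mem_Icc.mp hi
    have hj := mem_Icc.mp hj
    have hτ : τ - (((j : ℤ) - i : ℤ) : ℝ) * M =
        ((A i + i * M + τ) - (B j + j * M)) + -A i + B j := by
      push_cast; ring
    rw [hτ]
    calc _ ≤ |(A i + i * M + τ) - (B j + j * M)| + |-A i| + |B j| := abs_add_three _ _ _
      _ < M / 2 := by rw [abs_neg]; linarith [hXA i hi.1 hi.2, hXB j hj.1 hj.2]
  have hX : 0 ≤ X := (abs_nonneg _).trans (hXA i (mem_Icc.mp hi).1 (mem_Icc.mp hi).2)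
  exact Int.eq_of_abs_sub_mul_lt_half (by linarith) (near hi hj h) (near hi' hj' h')

theorem exists_alignmentCost_le_hausdorffCost (hn : 1 ≤ n) (hnm : n ≤ m) (hM : 8 * X < M)
    (hXA : ∀ i, 1 ≤ i → i ≤ n → |A i| ≤ X) (hXB : ∀ j, 1 ≤ j → j ≤ m → |B j| ≤ X) (τ : ℝ) :
    ∃ s ≤ m - n, ∃ c, alignmentCost hn A B s c ≤
      hausdorffCost hn hnm (fun i => A i + i * M) (fun j => B j + j * M) τ := by
  set D := hausdorffCost hn hnm (fun i => A i + i * M) (fun j => B j + j * M) τ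
  rcases le_or_gt (2 * X) D with hD | hD
  · exact ⟨0, Nat.zero_le _, 0, (alignmentCost_zero_le hn hnm hXA hXB).trans hD⟩
  have close : ∀ i ∈ Icc 1 n, ∃ j ∈ Icc 1 m,
      (Icc 1 m).inf' (nonempty_Icc.mpr (hn.trans hnm))
          (fun j => |(A i + i * M + τ) - (B j + j * M)|) = |(A i + i * M + τ) - (B j + j * M)| ∧
        |(A i + i * M + τ) - (B j + j * M)| < 2 * X := by
    intro i hi
    obtain ⟨j, hj, hmin⟩ := exists_mem_eq_inf' (nonempty_Icc.mpr (hn.trans hnm))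
      (fun j => |(A i + i * M + τ) - (B j + j * M)|)
    exact ⟨j, hj, hmin, hmin ▸ (sup'_lt_iff _).mp hD i hi⟩
  obtain ⟨j₁, hj₁, -, h₁⟩ := close 1 (mem_Icc.mpr ⟨le_rfl, hn⟩)
  have matched : ∀ i ∈ Icc 1 n, ∀ j ∈ Icc 1 m,
      |(A i + i * M + τ) - (B j + j * M)| < 2 * X → j = i + (j₁ - 1) := by
    intro i hi j hj h
    have := shift_eq_of_abs_lt hM hXA hXB hi hj (mem_Icc.mpr ⟨le_rfl, hn⟩) hj₁ h
      (by simpa using h₁)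
    have := (mem_Icc.mp hj₁).1
    omega
  refine ⟨j₁ - 1, ?_, τ - (j₁ - 1 : ℕ) * M, sup'_le _ _ fun i hi => ?_⟩
  · obtain ⟨j, hj, -, h⟩ := close n (mem_Icc.mpr ⟨hn, le_rfl⟩)
    have := matched n (mem_Icc.mpr ⟨hn, le_rfl⟩) j hj h
    have := (mem_Icc.mp hj).2
    omega
  · obtain ⟨j, hj, hmin, h⟩ := close i hi
    obtain rfl := matched i hi j hj h
    calc |(A i + (τ - (j₁ - 1 : ℕ) * M)) - B (i + (j₁ - 1))|
        = |(A i + i * M + τ) - (B (i + (j₁ - 1)) + (i + (j₁ - 1) : ℕ) * M)| := by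
          congr 1; push_cast; ring
      _ = _ := hmin.symm
      _ ≤ D := le_sup' (fun i => (Icc 1 m).inf' (nonempty_Icc.mpr (hn.trans hnm))
          (fun j => |(A i + i * M + τ) - (B j + j * M)|)) hi

end Staircase

theorem stmt8_general (n m : ℕ) (hn : 1 ≤ n) (hnm : n ≤ m)
    (A B : ℕ → ℝ)
    (X : ℝ)
    (hXA : ∀ i, 1 ≤ i → i ≤ n → |A i| ≤ X)
    (hXB : ∀ j, 1 ≤ j → j ≤ m → |B j| ≤ X)
    (M : ℝ) (hM : 10 * n * m * (X + 1) ≤ M) :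
    sInf {v : ℝ | ∃ τ : ℝ,
        v = (Finset.Icc 1 n).sup' (Finset.nonempty_Icc.mpr hn) fun i =>
              (Finset.Icc 1 m).inf' (Finset.nonempty_Icc.mpr (hn.trans hnm)) fun j =>
                |(A i + (i : ℝ) * M + τ) - (B j + (j : ℝ) * M)|} =
    sInf {v : ℝ | ∃ s : ℕ, s ≤ m - n ∧ ∃ c : ℝ,
        v = (Finset.Icc 1 n).sup' (Finset.nonempty_Icc.mpr hn) fun i =>
              |(A i + c) - B (i + s)|} := by
  have hM' : 8 * X < M := by
    have hX : 0 ≤ X := (abs_nonneg _).trans (hXA 1 le_rfl hn)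
    have hnm1 : (1 : ℝ) ≤ n * m := by exact_mod_cast Nat.mul_le_mul hn (hn.trans hnm)
    nlinarith
  refine csInf_eq_csInf_of_forall_exists_le ?_ ?_
  · rintro _ ⟨τ, rfl⟩
    obtain ⟨s, hs, c, hle⟩ := exists_alignmentCost_le_hausdorffCost hn hnm hM' hXA hXB τ
    exact ⟨_, ⟨s, hs, c, rfl⟩, hle⟩
  · rintro _ ⟨s, hs, c, rfl⟩
    exact ⟨_, ⟨c + s * M, rfl⟩, hausdorffCost_le_alignmentCost hn hnm hs c⟩

/-- Correctness of the reduction from the Linear Alignment problem to the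
one-dimensional directed Hausdorff distance under translation: with
P = {A(i)+iM : 1 ≤ i ≤ n} and Q = {B(j)+jM : 1 ≤ j ≤ m}, the optimal directed
Hausdorff distance of P to Q under translation equals the optimal Linear
Alignment value. -/
theorem stmt8 (n m : ℕ) (hn : 1 ≤ n) (hnm : n ≤ m)
    (A B : ℕ → ℝ)
    (hA : MonotoneOn A (Set.Icc 1 n)) (hB : MonotoneOn B (Set.Icc 1 m))
    (X : ℝ)
    (hXA : ∀ i, 1 ≤ i → i ≤ n → |A i| ≤ X)
    (hXB : ∀ j, 1 ≤ j → j ≤ m → |B j| ≤ X)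
    (M : ℝ) (hM : 10 * n * m * (X + 1) ≤ M) :
    sInf {v : ℝ | ∃ τ : ℝ,
        v = (Finset.Icc 1 n).sup' (Finset.nonempty_Icc.mpr hn) fun i =>
              (Finset.Icc 1 m).inf' (Finset.nonempty_Icc.mpr (hn.trans hnm)) fun j =>
                |(A i + (i : ℝ) * M + τ) - (B j + (j : ℝ) * M)|} =
    sInf {v : ℝ | ∃ s : ℕ, s ≤ m - n ∧ ∃ c : ℝ,
        v = (Finset.Icc 1 n).sup' (Finset.nonempty_Icc.mpr hn) fun i =>
              |(A i + c) - B (i + s)|} :=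
  stmt8_general n m hn hnm A B X hXA hXB M hM
end

section
/- Let n ≥ 2 be an integer and let A, B, C : {1,…,n} → ℤ take only values ≥ 1. Let M ∈ ℤ be divisible by 4 with M > 4·max_{i,j,k} (A(i) + B(j) + C(k)), and set δ = M/4 − 1. Define the finite sets of integers T = { −(k·M + C(k)) : k ∈ {2,…,n} }, P = { i·M + A(i) + M/4 : i ∈ {1,…,n} }, and Q = { −z·M + M/4 : z ∈ {−n, −n+1, …, 0} } ∪ { −(j·M + B(j)) : j ∈ {1,…,n} }. Then the following are equivalent: (a) there exists k ∈ {2,…,n} such that A(i) + B(k−i) < C(k) for all i ∈ {1,…,k−1}; (b) there exists τ ∈ T such that for every p ∈ P there is q ∈ Q with |p + τ − q| ≤ δ. (Correctness of the reduction from MaxConv LowerBound to one-dimensional discrete directed Hausdorff under translation: (a) says the MaxConv LowerBound instance (A,B,C) is a NO-instance, and (b) says the constructed discrete Hausdorff-under-translation instance is a YES-instance.) -/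
/-- Correctness of the reduction from MaxConv LowerBound to one-dimensional
discrete directed Hausdorff under translation. (a) says the MaxConv LowerBound
instance (A,B,C) is a NO-instance; (b) says the constructed discrete
Hausdorff-under-translation instance — with translations
T = {−(kM + C(k)) : 2 ≤ k ≤ n}, points P = {iM + A(i) + M/4 : 1 ≤ i ≤ n}, and
targets Q = {−zM + M/4 : −n ≤ z ≤ 0} ∪ {−(jM + B(j)) : 1 ≤ j ≤ n}, with
δ = M/4 − 1 — is a YES-instance. -/
theorem stmt9 (n : ℕ) (hn : 2 ≤ n) (A B C : ℕ → ℤ)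
    (hA : ∀ i, 1 ≤ i → i ≤ n → 1 ≤ A i)
    (hB : ∀ j, 1 ≤ j → j ≤ n → 1 ≤ B j)
    (hC : ∀ k, 1 ≤ k → k ≤ n → 1 ≤ C k)
    (M : ℤ) (hM4 : (4 : ℤ) ∣ M)
    (hMbig : ∀ i j k, 1 ≤ i → i ≤ n → 1 ≤ j → j ≤ n → 1 ≤ k → k ≤ n →
        4 * (A i + B j + C k) < M)
    (δ : ℤ) (hδ : δ = M / 4 - 1) :
    (∃ k, 2 ≤ k ∧ k ≤ n ∧ ∀ i, 1 ≤ i → i ≤ k - 1 → A i + B (k - i) < C k) ↔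
    (∃ k, 2 ≤ k ∧ k ≤ n ∧ ∀ i, 1 ≤ i → i ≤ n →
        ((∃ z : ℤ, -(n : ℤ) ≤ z ∧ z ≤ 0 ∧
            |((i : ℤ) * M + A i + M / 4) + (-((k : ℤ) * M + C k)) -
              (-z * M + M / 4)| ≤ δ) ∨
         (∃ j, 1 ≤ j ∧ j ≤ n ∧
            |((i : ℤ) * M + A i + M / 4) + (-((k : ℤ) * M + C k)) -
              (-((j : ℤ) * M + B j))| ≤ δ))) := by
  obtain ⟨m, hM⟩ := hM4
  have hm : M / 4 = m := by rw [hM, Int.mul_ediv_cancel_left _ (by norm_num)]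
  subst hδ
  rw [hm] at *
  have hm4 : 4 ≤ m := by
    have := hMbig 1 1 1 le_rfl (by omega) le_rfl (by omega) le_rfl (by omega)
    have := hA 1 le_rfl (by omega)
    have := hB 1 le_rfl (by omega)
    have := hC 1 le_rfl (by omega)
    linarith
  have hAub : ∀ i, 1 ≤ i → i ≤ n → A i ≤ m - 3 := fun i h1 h2 => by
    have := hMbig i 1 1 h1 h2 le_rfl (by omega) le_rfl (by omega)
    have := hB 1 le_rfl (by omega)
    have := hC 1 le_rfl (by omega)
    linarith
  have hBub : ∀ j, 1 ≤ j → j ≤ n → B j ≤ m - 3 := fun j h1 h2 => by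
    have := hMbig 1 j 1 le_rfl (by omega) h1 h2 le_rfl (by omega)
    have := hA 1 le_rfl (by omega)
    have := hC 1 le_rfl (by omega)
    linarith
  have hCub : ∀ k, 1 ≤ k → k ≤ n → C k ≤ m - 3 := fun k h1 h2 => by
    have := hMbig 1 1 k le_rfl (by omega) le_rfl (by omega) h1 h2
    have := hA 1 le_rfl (by omega)
    have := hB 1 le_rfl (by omega)
    linarith
  constructor
  · rintro ⟨k, hk2, hkn, h⟩
    refine ⟨k, hk2, hkn, fun i hi1 hin => ?_⟩
    by_cases hik : k ≤ i
    · -- use the z-option with z = k - i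
      left
      refine ⟨(k : ℤ) - i, by omega, by omega, ?_⟩
      have he : ((i : ℤ) * M + A i + m) + (-((k : ℤ) * M + C k)) -
          (-((k : ℤ) - i) * M + m) = A i - C k := by ring
      rw [he, abs_le]
      have h1 := hA i hi1 hin
      have h2 := hAub i hi1 hin
      have h3 := hC k (by omega) hkn
      have h4 := hCub k (by omega) hkn
      constructor <;> linarith
    · -- use the j-option with j = k - i
      right
      have hik' : i ≤ k - 1 := by omega
      refine ⟨k - i, by omega, by omega, ?_⟩
      have hj' : ((k - i : ℕ) : ℤ) = (k : ℤ) - i := by omega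
      have he : ((i : ℤ) * M + A i + m) + (-((k : ℤ) * M + C k)) -
          (-(((k - i : ℕ) : ℤ) * M + B (k - i))) = A i + B (k - i) - C k + m := by
        rw [hj']; ring
      rw [he, abs_le]
      have h1 := h i hi1 hik'
      have h2 := hA i hi1 hin
      have h3 := hB (k - i) (by omega) (by omega)
      have h4 := hC k (by omega) hkn
      have h5 := hCub k (by omega) hkn
      constructor <;> linarith
  · rintro ⟨k, hk2, hkn, h⟩
    refine ⟨k, hk2, hkn, fun i hi1 hik => ?_⟩
    have hin : i ≤ n := by omega
    have hMpos : 0 < M := by rw [hM]; linarith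
    have h1 := hA i hi1 hin
    have h2 := hAub i hi1 hin
    have h3 := hC k (by omega) hkn
    have h4 := hCub k (by omega) hkn
    rcases h i hi1 hin with ⟨z, hz1, hz2, habs⟩ | ⟨j, hj1, hjn, habs⟩
    · exfalso
      have he : ((i : ℤ) * M + A i + m) + (-((k : ℤ) * M + C k)) - (-z * M + m) =
          ((i : ℤ) - k + z) * M + (A i - C k) := by ring
      rw [he, abs_le] at habs
      have hs : (i : ℤ) - k + z ≤ -1 := by omega
      have := mul_le_mul_of_nonneg_right hs hMpos.le
      rw [hM] at this habs
      linarith [habs.1]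
    · have h5 := hB j hj1 hjn
      have h6 := hBub j hj1 hjn
      have hs : (i : ℤ) + j - k = 0 := by
        by_contra hne
        have he : ((i : ℤ) * M + A i + m) + (-((k : ℤ) * M + C k)) -
            (-((j : ℤ) * M + B j)) = ((i : ℤ) + j - k) * M + (A i + B j - C k + m) := by
          ring
        rw [he, abs_le] at habs
        rcases lt_or_gt_of_ne hne with hlt | hgt
        · have hs1 : (i : ℤ) + j - k ≤ -1 := by omega
          have := mul_le_mul_of_nonneg_right hs1 hMpos.le
          rw [hM] at this habs
          linarith [habs.1]
        · have hs1 : (1 : ℤ) ≤ (i : ℤ) + j - k := by omega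
          have := mul_le_mul_of_nonneg_right hs1 hMpos.le
          rw [hM] at this habs
          linarith [habs.2]
      have hj : j = k - i := by omega
      subst hj
      have he : ((i : ℤ) * M + A i + m) + (-((k : ℤ) * M + C k)) -
          (-(((k - i : ℕ) : ℤ) * M + B (k - i))) = A i + B (k - i) - C k + m := by
        have : ((k - i : ℕ) : ℤ) = (k : ℤ) - i := by omega
        rw [this]; ring
      rw [he, abs_le] at habs
      linarith [habs.2]
end

section
/- Let δ > 0 and let r ∈ ℝ with |r| ≤ 5δ/3. Let g ∈ {−2δ/3, 0, 2δ/3} be any element with |r − g| ≤ |r − g'| for all g' ∈ {−2δ/3, 0, 2δ/3}. Then |r − (3/2)·g| ≤ 2δ/3. (Geometric core of the gadget in the reduction from the Translation Problem with Orthants to undirected Hausdorff under translation: scaling a closest grid point of the grid {−2δ/3,0,2δ/3} by 3/2 keeps it within distance 2δ/3 of the original point.) -/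
/-- Geometric core of the orthants-to-undirected-Hausdorff gadget: if g is a
closest point of the grid {−2δ/3, 0, 2δ/3} to r with |r| ≤ 5δ/3, then scaling
g by 3/2 keeps it within distance 2δ/3 of r. -/
theorem stmt11 (δ r g : ℝ) (hδ : 0 < δ) (hr : |r| ≤ 5 * δ / 3)
    (hg : g ∈ ({-(2 * δ / 3), 0, 2 * δ / 3} : Set ℝ))
    (hclosest : ∀ g' ∈ ({-(2 * δ / 3), 0, 2 * δ / 3} : Set ℝ), |r - g| ≤ |r - g'|) :
    |r - (3 / 2) * g| ≤ 2 * δ / 3 := by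
  have h1 := hclosest (-(2 * δ / 3)) (by simp [Set.mem_insert_iff])
  have h2 := hclosest 0 (by simp [Set.mem_insert_iff])
  have h3 := hclosest (2 * δ / 3) (by simp [Set.mem_insert_iff])
  have q1 := mul_self_le_mul_self (abs_nonneg _) h1
  have q2 := mul_self_le_mul_self (abs_nonneg _) h2
  have q3 := mul_self_le_mul_self (abs_nonneg _) h3
  rw [abs_mul_abs_self, abs_mul_abs_self] at q1 q2 q3
  rw [abs_le] at hr ⊢
  simp only [Set.mem_insert_iff, Set.mem_singleton_iff] at hg
  rcases hg with h | h | h <;> subst h <;>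
    constructor <;> nlinarith [hr.1, hr.2]
end

section
/- Let d ≥ 1, K ≥ 1 and n ≥ 1 be integers and set k = d·K. For a tuple w : {0,…,k−1} → {0,…,n−1}, define cel(w) ∈ ℤ^d by cel(w)_r = Σ_{a=0}^{K−1} w(r·K + a) · n^{K−1−a} for r ∈ {0,…,d−1}. Let S ⊆ {0,…,k−1} be a nonempty set with |S| ≤ 3, and let v : {0,…,k−1} → {0,…,n−1}. Then there exists a family 𝓑 of at most 3·(n^{K−1} + 1) axis-parallel boxes in ℝ^d, each of the form ∏_{r=0}^{d−1} [α_r, β_r) with integer endpoints, such that for every tuple w : {0,…,k−1} → {0,…,n−1}: cel(w) ∈ ⋃_{B∈𝓑} B if and only if there exists s ∈ S with w(s) ≠ v(s). (The feasible region of a non-edge, i.e., the set of cells of the encoding whose k-tuple avoids the partial assignment (S,v) in at least one coordinate of S, can be covered exactly by O(n^{k/d − 1}) boxes.) -/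
/-- The encoding of k-tuples (k = d·K) over an n-element alphabet as integer
grid points of the d-dimensional cube {0, …, n^K − 1}^d: group K consecutive
tuple coordinates per dimension and read them as a base-n number. -/
def cel (d K n : ℕ) (w : Fin (d * K) → Fin n) : Fin d → ℤ :=
  fun r => ∑ a : Fin K,
    ((w ⟨r.val * K + a.val, by
        have h1 : r.val + 1 ≤ d := r.isLt
        have h2 : a.val < K := a.isLt
        have h3 : (r.val + 1) * K ≤ d * K := Nat.mul_le_mul_right K h1
        have h4 : (r.val + 1) * K = r.val * K + K := by ring
        omega⟩ : ℕ) : ℤ) * (n : ℤ) ^ (K - 1 - a.val)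



open Finset

private lemma tail_lt {n : ℕ} (hn : 1 ≤ n) (K : ℕ) (g : ℕ → ℕ) (hg : ∀ i, g i < n) :
    ∀ t a, K = a + t → ∑ i ∈ Finset.Ico a K, g i * n ^ (K - 1 - i) < n ^ t := by
  intro t
  induction t with
  | zero => intro a ha; subst ha; simp
  | succ t ih =>
      intro a ha
      have haK : a < K := by omega
      rw [Finset.sum_eq_sum_Ico_succ_bot haK]
      have h1 := ih (a + 1) (by omega)
      have h2 := hg a
      have e : K - 1 - a = t := by omega
      rw [e]
      calc g a * n ^ t + ∑ i ∈ Finset.Ico (a + 1) K, g i * n ^ (K - 1 - i)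
          < g a * n ^ t + n ^ t := Nat.add_lt_add_left h1 _
        _ = (g a + 1) * n ^ t := by ring
        _ ≤ n * n ^ t := Nat.mul_le_mul_right _ (by omega)
        _ = n ^ (t + 1) := by ring

private lemma decomp {n : ℕ} (hn : 1 ≤ n) (K : ℕ) (g : ℕ → ℕ) (hg : ∀ i, g i < n)
    (a : ℕ) (ha : a < K) :
    ∃ h lo, (∑ i ∈ Finset.range K, g i * n ^ (K - 1 - i))
        = h * (n * n ^ (K - 1 - a)) + g a * n ^ (K - 1 - a) + lo
      ∧ lo < n ^ (K - 1 - a) := by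
  refine ⟨∑ i ∈ Finset.range a, g i * n ^ (a - 1 - i),
      ∑ i ∈ Finset.Ico (a + 1) K, g i * n ^ (K - 1 - i), ?_, ?_⟩
  · have hhi : ∑ i ∈ Finset.range a, g i * n ^ (K - 1 - i)
        = (∑ i ∈ Finset.range a, g i * n ^ (a - 1 - i)) * (n * n ^ (K - 1 - a)) := by
      rw [Finset.sum_mul]
      refine Finset.sum_congr rfl fun i hi => ?_
      rw [Finset.mem_range] at hi
      have e : K - 1 - i = (a - 1 - i) + ((K - 1 - a) + 1) := by omega
      rw [e, pow_add, pow_succ]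
      ring
    have hsplit : ∑ i ∈ Finset.range K, g i * n ^ (K - 1 - i)
        = (∑ i ∈ Finset.range (a + 1), g i * n ^ (K - 1 - i))
          + ∑ i ∈ Finset.Ico (a + 1) K, g i * n ^ (K - 1 - i) := by
      rw [Finset.range_eq_Ico, ← Finset.sum_Ico_consecutive _ (Nat.zero_le (a + 1))
        (by omega : a + 1 ≤ K), ← Finset.range_eq_Ico]
    rw [hsplit, Finset.sum_range_succ, hhi]
  · exact tail_lt hn K g hg (K - 1 - a) (a + 1) (by omega)

private lemma key_forward {n m c d0 h lo : ℕ} (j : ℕ)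
    (hlo : lo < m) (hc : c < n)
    (h1 : (j : ℤ) * ((n : ℤ) * (m : ℤ)) - ((n : ℤ) - 1 - (c : ℤ)) * (m : ℤ)
        ≤ (h : ℤ) * ((n : ℤ) * (m : ℤ)) + (d0 : ℤ) * (m : ℤ) + (lo : ℤ))
    (h2 : (h : ℤ) * ((n : ℤ) * (m : ℤ)) + (d0 : ℤ) * (m : ℤ) + (lo : ℤ)
        < (j : ℤ) * ((n : ℤ) * (m : ℤ)) + (c : ℤ) * (m : ℤ)) :
    d0 ≠ c := by
  intro hdc
  subst hdc
  have hlo' : (lo : ℤ) < m := by exact_mod_cast hlo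
  have hlo0 : (0 : ℤ) ≤ lo := Int.natCast_nonneg _
  have hm0 : (0 : ℤ) ≤ m := Int.natCast_nonneg _
  have hn0 : (0 : ℤ) ≤ n := Int.natCast_nonneg _
  rcases le_or_gt j h with hjh | hjh
  · have hjh' : (j : ℤ) ≤ h := by exact_mod_cast hjh
    have := mul_le_mul_of_nonneg_right hjh' (by positivity : (0:ℤ) ≤ (n : ℤ) * m)
    linarith
  · have hjh' : (h : ℤ) + 1 ≤ j := by exact_mod_cast hjh
    have hmm := mul_le_mul_of_nonneg_right hjh' (by positivity : (0:ℤ) ≤ (n : ℤ) * m)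
    have e2 : ((h : ℤ) + 1) * ((n : ℤ) * m) = (h : ℤ) * ((n : ℤ) * m) + (n : ℤ) * m := by ring
    have e3 : ((n : ℤ) - 1 - (d0 : ℤ)) * m = (n : ℤ) * m - m - (d0 : ℤ) * m := by ring
    linarith

private lemma key_backward {n m c d0 h lo N T : ℕ}
    (hlo : lo < m) (hc : c < n) (hd0 : d0 < n) (hne : d0 ≠ c) (hNT : N ≤ T)
    (hx : h * (n * m) + d0 * m + lo < N * (n * m)) :
    ∃ j ≤ T, (j : ℤ) * ((n : ℤ) * (m : ℤ)) - ((n : ℤ) - 1 - (c : ℤ)) * (m : ℤ)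
        ≤ (h : ℤ) * ((n : ℤ) * (m : ℤ)) + (d0 : ℤ) * (m : ℤ) + (lo : ℤ)
      ∧ (h : ℤ) * ((n : ℤ) * (m : ℤ)) + (d0 : ℤ) * (m : ℤ) + (lo : ℤ)
        < (j : ℤ) * ((n : ℤ) * (m : ℤ)) + (c : ℤ) * (m : ℤ) := by
  have hlo' : (lo : ℤ) < m := by exact_mod_cast hlo
  have hlo0 : (0 : ℤ) ≤ lo := Int.natCast_nonneg _
  have hm0 : (0 : ℤ) ≤ m := Int.natCast_nonneg _
  have hd00 : (0 : ℤ) ≤ d0 := Int.natCast_nonneg _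
  have hcn : (c : ℤ) + 1 ≤ n := by exact_mod_cast hc
  have hhN : h < N := by
    have h8 : h * (n * m) ≤ h * (n * m) + d0 * m + lo := by omega
    exact lt_of_mul_lt_mul_right (lt_of_le_of_lt h8 hx) (Nat.zero_le _)
  rcases Nat.lt_or_ge d0 c with hdc | hdc
  · refine ⟨h, by omega, ?_, ?_⟩
    · have h9 : (0 : ℤ) ≤ ((n : ℤ) - 1 - c) * m := by
        apply mul_nonneg (by linarith) hm0
      nlinarith [mul_nonneg hd00 hm0]
    · have h5 : ((d0 : ℤ) + 1) * m ≤ (c : ℤ) * m := by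
        apply mul_le_mul_of_nonneg_right _ hm0
        exact_mod_cast (show (d0 + 1 : ℕ) ≤ c by omega)
      nlinarith
  · have hdc' : c < d0 := lt_of_le_of_ne hdc (Ne.symm hne)
    refine ⟨h + 1, by omega, ?_, ?_⟩
    · have h6 : ((c : ℤ) + 1) * m ≤ (d0 : ℤ) * m := by
        apply mul_le_mul_of_nonneg_right _ hm0
        exact_mod_cast (show (c + 1 : ℕ) ≤ d0 by omega)
      push_cast
      nlinarith
    · have h7 : ((d0 : ℤ) + 1) * m ≤ (n : ℤ) * m := by
        apply mul_le_mul_of_nonneg_right _ hm0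
        exact_mod_cast hd0
      have hc0 : (0 : ℤ) ≤ (c : ℤ) * m := mul_nonneg (Int.natCast_nonneg _) hm0
      push_cast
      nlinarith

private lemma key_forward' {n m c d0 h lo : ℕ} (j : ℕ)
    (hlo : lo < m) (hc : c < n)
    (h1 : (j : ℤ) * ((n : ℤ) * (m : ℤ)) - ((n : ℤ) - 1 - (c : ℤ)) * (m : ℤ)
        ≤ ((h * (n * m) + d0 * m + lo : ℕ) : ℤ))
    (h2 : ((h * (n * m) + d0 * m + lo : ℕ) : ℤ)
        < (j : ℤ) * ((n : ℤ) * (m : ℤ)) + (c : ℤ) * (m : ℤ)) :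
    d0 ≠ c := by
  push_cast at h1 h2
  exact key_forward (h := h) j hlo hc (by linarith) (by linarith)

private lemma key_backward' {n m c d0 h lo N T : ℕ}
    (hlo : lo < m) (hc : c < n) (hd0 : d0 < n) (hne : d0 ≠ c) (hNT : N ≤ T)
    (hx : h * (n * m) + d0 * m + lo < N * (n * m)) :
    ∃ j ≤ T, (j : ℤ) * ((n : ℤ) * (m : ℤ)) - ((n : ℤ) - 1 - (c : ℤ)) * (m : ℤ)
        ≤ ((h * (n * m) + d0 * m + lo : ℕ) : ℤ)
      ∧ ((h * (n * m) + d0 * m + lo : ℕ) : ℤ)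
        < (j : ℤ) * ((n : ℤ) * (m : ℤ)) + (c : ℤ) * (m : ℤ) := by
  obtain ⟨j, hj, hk1, hk2⟩ := key_backward hlo hc hd0 hne hNT hx
  exact ⟨j, hj, by push_cast; linarith, by push_cast; linarith⟩

/-- The feasible region of a non-edge: the set of cells cel(w) whose tuple w
differs from the partial assignment (S, v) in at least one position of S can be
covered exactly by at most 3·(n^{K−1} + 1) axis-parallel boxes
∏_r [α_r, β_r) with integer endpoints. -/
theorem stmt12 (d K n : ℕ) (hd : 1 ≤ d) (hK : 1 ≤ K) (hn : 1 ≤ n)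
    (S : Finset (Fin (d * K))) (hSne : S.Nonempty) (hScard : S.card ≤ 3)
    (v : Fin (d * K) → Fin n) :
    ∃ ℬ : Finset ((Fin d → ℤ) × (Fin d → ℤ)),
      ℬ.card ≤ 3 * (n ^ (K - 1) + 1) ∧
      ∀ w : Fin (d * K) → Fin n,
        ((∃ B ∈ ℬ, ∀ r, B.1 r ≤ cel d K n w r ∧ cel d K n w r < B.2 r) ↔
          ∃ s ∈ S, w s ≠ v s) := by
  classical
  have hK0 : 0 < K := hK
  -- digit function
  set g : (Fin (d * K) → Fin n) → Fin d → ℕ → ℕ := fun w r i =>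
    if hh : r.val * K + i < d * K then (w ⟨r.val * K + i, hh⟩ : ℕ) else 0 with hgdef
  have hg : ∀ w r i, g w r i < n := by
    intro w r i
    simp only [hgdef]
    split
    · exact (w _).isLt
    · omega
  set X : (Fin (d * K) → Fin n) → Fin d → ℕ :=
    fun w r => ∑ i ∈ Finset.range K, g w r i * n ^ (K - 1 - i) with hXdef
  have hcel : ∀ w r, cel d K n w r = ((X w r : ℕ) : ℤ) := by
    intro w r
    have : ((X w r : ℕ) : ℤ)
        = ∑ i ∈ Finset.range K, ((g w r i : ℤ) * (n : ℤ) ^ (K - 1 - i)) := by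
      simp only [hXdef]
      push_cast
      rfl
    rw [this, ← Fin.sum_univ_eq_sum_range (fun i => (g w r i : ℤ) * (n : ℤ) ^ (K - 1 - i)) K]
    unfold cel
    refine Finset.sum_congr rfl fun a _ => ?_
    congr 2
    have hlt : r.val * K + a.val < d * K := by
      have h1 : r.val + 1 ≤ d := r.isLt
      have h3 : (r.val + 1) * K ≤ d * K := Nat.mul_le_mul_right K h1
      have h4 : (r.val + 1) * K = r.val * K + K := by ring
      have h2 : a.val < K := a.isLt
      omega
    simp only [hgdef, dif_pos hlt]
  have hXlt : ∀ w r, X w r < n ^ K := by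
    intro w r
    have := tail_lt hn K (g w r) (hg w r) K 0 (by omega)
    rwa [← Finset.range_eq_Ico] at this
  -- the dimension index of a tuple position
  have hrs : ∀ s : Fin (d * K), s.val / K < d := by
    intro s
    exact (Nat.div_lt_iff_lt_mul hK0).mpr s.isLt
  -- boxes
  set lower : Fin (d * K) → ℕ → (Fin d → ℤ) := fun s j r =>
    if r.val = s.val / K then
      (j : ℤ) * ((n : ℤ) * ((n ^ (K - 1 - s.val % K) : ℕ) : ℤ))
        - ((n : ℤ) - 1 - ((v s : ℕ) : ℤ)) * ((n ^ (K - 1 - s.val % K) : ℕ) : ℤ)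
    else 0 with hlowdef
  set upper : Fin (d * K) → ℕ → (Fin d → ℤ) := fun s j r =>
    if r.val = s.val / K then
      (j : ℤ) * ((n : ℤ) * ((n ^ (K - 1 - s.val % K) : ℕ) : ℤ))
        + ((v s : ℕ) : ℤ) * ((n ^ (K - 1 - s.val % K) : ℕ) : ℤ)
    else ((n ^ K : ℕ) : ℤ) with huppdef
  refine ⟨(S ×ˢ Finset.range (n ^ (K - 1) + 1)).image (fun p => (lower p.1 p.2, upper p.1 p.2)),
    ?_, ?_⟩
  · calc ((S ×ˢ Finset.range (n ^ (K - 1) + 1)).image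
          (fun p => (lower p.1 p.2, upper p.1 p.2))).card
        ≤ (S ×ˢ Finset.range (n ^ (K - 1) + 1)).card := Finset.card_image_le
      _ = S.card * (n ^ (K - 1) + 1) := by rw [Finset.card_product, Finset.card_range]
      _ ≤ 3 * (n ^ (K - 1) + 1) := Nat.mul_le_mul_right _ hScard
  intro w
  -- decomposition of X w r at position s
  have hdecomp : ∀ s : Fin (d * K), ∃ hi lo,
      X w ⟨s.val / K, hrs s⟩
        = hi * (n * n ^ (K - 1 - s.val % K)) + (w s : ℕ) * n ^ (K - 1 - s.val % K) + lo
      ∧ lo < n ^ (K - 1 - s.val % K) := by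
    intro s
    obtain ⟨hi, lo, heq, hlo⟩ := decomp hn K (g w ⟨s.val / K, hrs s⟩)
      (hg w _) (s.val % K) (Nat.mod_lt _ hK0)
    refine ⟨hi, lo, ?_, hlo⟩
    have hidx : s.val / K * K + s.val % K = s.val := Nat.div_add_mod' s.val K
    have hgs : g w ⟨s.val / K, hrs s⟩ (s.val % K) = (w s : ℕ) := by
      simp only [hgdef]
      rw [dif_pos (show s.val / K * K + s.val % K < d * K by rw [hidx]; exact s.isLt)]
      exact congrArg (fun t : Fin (d * K) => (w t : ℕ)) (Fin.ext hidx)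
    show (∑ i ∈ Finset.range K, g w ⟨s.val / K, hrs s⟩ i * n ^ (K - 1 - i)) = _
    rw [heq, hgs]
  have hxbound : ∀ s : Fin (d * K), ∀ hi lo : ℕ,
      X w ⟨s.val / K, hrs s⟩
          = hi * (n * n ^ (K - 1 - s.val % K)) + (w s : ℕ) * n ^ (K - 1 - s.val % K) + lo →
      hi * (n * n ^ (K - 1 - s.val % K)) + (w s : ℕ) * n ^ (K - 1 - s.val % K) + lo
        < n ^ (s.val % K) * (n * n ^ (K - 1 - s.val % K)) := by
    intro s hi lo heq
    rw [← heq]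
    have hpow : n ^ (s.val % K) * (n * n ^ (K - 1 - s.val % K)) = n ^ K := by
      rw [show n * n ^ (K - 1 - s.val % K) = n ^ (K - 1 - s.val % K + 1) from (pow_succ' n _).symm,
        ← pow_add]
      congr 1
      have := Nat.mod_lt s.val hK0
      omega
    rw [hpow]
    exact hXlt w _
  have hNT : ∀ s : Fin (d * K), n ^ (s.val % K) ≤ n ^ (K - 1) := by
    intro s
    apply Nat.pow_le_pow_right hn
    have := Nat.mod_lt s.val hK0
    omega
  constructor
  · rintro ⟨B, hB, hmem⟩
    rw [Finset.mem_image] at hB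
    obtain ⟨⟨s, j⟩, hp, rfl⟩ := hB
    rw [Finset.mem_product, Finset.mem_range] at hp
    obtain ⟨hsS, _⟩ := hp
    refine ⟨s, hsS, ?_⟩
    obtain ⟨hm1, hm2⟩ := hmem ⟨s.val / K, hrs s⟩
    obtain ⟨hi, lo, heq, hlo⟩ := hdecomp s
    rw [hcel, heq] at hm1 hm2
    simp only [hlowdef, if_pos rfl] at hm1
    simp only [huppdef, if_pos rfl] at hm2
    intro hcon
    exact key_forward' j hlo (v s).isLt hm1 hm2 (congrArg Fin.val hcon)
  · rintro ⟨s, hsS, hne⟩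
    obtain ⟨hi, lo, heq, hlo⟩ := hdecomp s
    have hne' : (w s : ℕ) ≠ (v s : ℕ) := fun hh => hne (Fin.ext hh)
    obtain ⟨j, hj, hk1, hk2⟩ := key_backward' hlo (v s).isLt (w s).isLt hne' (hNT s)
      (hxbound s hi lo heq)
    refine ⟨(lower s j, upper s j), Finset.mem_image.mpr
      ⟨(s, j), Finset.mem_product.mpr ⟨hsS, Finset.mem_range.mpr (by omega)⟩, rfl⟩, ?_⟩
    intro r
    by_cases hr : r.val = s.val / K
    · have hreq : r = ⟨s.val / K, hrs s⟩ := Fin.ext hr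
      subst hreq
      rw [hcel, heq]
      simp only [hlowdef, huppdef, if_pos rfl]
      exact ⟨hk1, hk2⟩
    · simp only [hlowdef, huppdef, if_neg hr]
      rw [hcel]
      constructor
      · exact Int.natCast_nonneg _
      · exact_mod_cast hXlt w r
end

section
/- Let x ≥ 1 be an integer and let R_1, …, R_x be open axis-parallel rectangles in ℝ², R_i = (a_i, b_i) × (c_i, d_i) with a_i < b_i and c_i < d_i, forming a staircase: b_i ≤ a_{i+1} and d_i ≤ c_{i+1} for all 1 ≤ i ≤ x−1. Then there exists a family 𝒪 of at most 3x + 3 orthants, where an orthant is a set of the form I₁ × I₂ with each I_h equal to ℝ, a closed left ray (−∞, t], or a closed right ray [t, ∞), such that ⋃_{O∈𝒪} O = ℝ² \ ⋃_{i=1}^x R_i. (The complement of a quasi-diagonal of x forbidden regions can be covered exactly by at most 3x+3 orthants.) -/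
/-- A (possibly improper) closed ray in ℝ: all of ℝ, a left ray (−∞, t],
or a right ray [t, ∞). -/
inductive Ray
  | all : Ray
  | left : ℝ → Ray
  | right : ℝ → Ray

/-- The set of reals belonging to a ray. -/
def Ray.toSet : Ray → Set ℝ
  | .all => Set.univ
  | .left t => Set.Iic t
  | .right t => Set.Ici t

/-- An orthant in ℝ² is a product of two rays. -/
def orthantSet (O : Ray × Ray) : Set (ℝ × ℝ) :=
  {p | p.1 ∈ O.1.toSet ∧ p.2 ∈ O.2.toSet}

/-- Clamped index into `Fin (m+1)`. -/
def cidx (m j : ℕ) : Fin (m + 1) := ⟨min j m, by omega⟩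

/-- The covering family of orthants. -/
def covO (m : ℕ) (a b c d : Fin (m + 1) → ℝ) : ℕ → Ray × Ray
  | 0 => (.all, .left (c 0))
  | 1 => (.all, .right (d (Fin.last m)))
  | 2 => (.left (a 0), .all)
  | 3 => (.right (b (Fin.last m)), .all)
  | (j + 4) =>
      if j % 2 = 0 then (.right (b (cidx m (j / 2))), .left (c (cidx m (j / 2 + 1))))
      else (.left (a (cidx m (j / 2 + 1))), .right (d (cidx m (j / 2))))

/-- The complement of a quasi-diagonal (staircase) of x open axis-parallel
rectangles can be covered exactly by at most 3x + 3 orthants. -/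
theorem stmt13 (x : ℕ) (hx : 1 ≤ x) (a b c d : Fin x → ℝ)
    (hab : ∀ i, a i < b i) (hcd : ∀ i, c i < d i)
    (hstair1 : ∀ (i : Fin x) (h : i.val + 1 < x), b i ≤ a ⟨i.val + 1, h⟩)
    (hstair2 : ∀ (i : Fin x) (h : i.val + 1 < x), d i ≤ c ⟨i.val + 1, h⟩) :
    ∃ (N : ℕ) (O : Fin N → Ray × Ray), N ≤ 3 * x + 3 ∧
      (⋃ k : Fin N, orthantSet (O k)) =
        Set.univ \ ⋃ i : Fin x, Set.Ioo (a i) (b i) ×ˢ Set.Ioo (c i) (d i) := by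
  classical
  obtain ⟨m, rfl⟩ : ∃ m, x = m + 1 := ⟨x - 1, by omega⟩
  -- basic monotonicity facts
  have keyba : ∀ n : ℕ, ∀ h : n < m + 1, ∀ i : Fin (m + 1), i.val < n → b i ≤ a ⟨n, h⟩ := by
    intro n
    induction n with
    | zero => intro h i hi; omega
    | succ n ih =>
      intro h i hi
      have hn : n < m + 1 := by omega
      rcases Nat.lt_or_ge i.val n with hlt | hge
      · have h1 : b i ≤ a ⟨n, hn⟩ := ih hn i hlt
        have h2 : a ⟨n, hn⟩ < b ⟨n, hn⟩ := hab _
        have h3 : b ⟨n, hn⟩ ≤ a ⟨n + 1, h⟩ := hstair1 ⟨n, hn⟩ h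
        linarith
      · have hieq : i = ⟨n, hn⟩ := Fin.ext (show i.val = n by omega)
        rw [hieq]
        exact hstair1 ⟨n, hn⟩ h
  have keydc : ∀ n : ℕ, ∀ h : n < m + 1, ∀ i : Fin (m + 1), i.val < n → d i ≤ c ⟨n, h⟩ := by
    intro n
    induction n with
    | zero => intro h i hi; omega
    | succ n ih =>
      intro h i hi
      have hn : n < m + 1 := by omega
      rcases Nat.lt_or_ge i.val n with hlt | hge
      · have h1 : d i ≤ c ⟨n, hn⟩ := ih hn i hlt
        have h2 : c ⟨n, hn⟩ < d ⟨n, hn⟩ := hcd _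
        have h3 : d ⟨n, hn⟩ ≤ c ⟨n + 1, h⟩ := hstair2 ⟨n, hn⟩ h
        linarith
      · have hieq : i = ⟨n, hn⟩ := Fin.ext (show i.val = n by omega)
        rw [hieq]
        exact hstair2 ⟨n, hn⟩ h
  have hba : ∀ i j : Fin (m + 1), i.val < j.val → b i ≤ a j := by
    intro i j hij
    have := keyba j.val j.isLt i hij
    simpa using this
  have hdc : ∀ i j : Fin (m + 1), i.val < j.val → d i ≤ c j := by
    intro i j hij
    have := keydc j.val j.isLt i hij
    simpa using this
  have hA : ∀ i j : Fin (m + 1), i.val ≤ j.val → a i ≤ a j := by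
    intro i j hij
    rcases eq_or_lt_of_le hij with h | h
    · rw [Fin.ext h]
    · exact le_of_lt (lt_of_lt_of_le (hab i) (hba i j h))
  have hB : ∀ i j : Fin (m + 1), i.val ≤ j.val → b i ≤ b j := by
    intro i j hij
    rcases eq_or_lt_of_le hij with h | h
    · rw [Fin.ext h]
    · exact le_of_lt (lt_of_le_of_lt (hba i j h) (hab j))
  have hC : ∀ i j : Fin (m + 1), i.val ≤ j.val → c i ≤ c j := by
    intro i j hij
    rcases eq_or_lt_of_le hij with h | h
    · rw [Fin.ext h]
    · exact le_of_lt (lt_of_lt_of_le (hcd i) (hdc i j h))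
  have hD : ∀ i j : Fin (m + 1), i.val ≤ j.val → d i ≤ d j := by
    intro i j hij
    rcases eq_or_lt_of_le hij with h | h
    · rw [Fin.ext h]
    · exact le_of_lt (lt_of_le_of_lt (hdc i j h) (hcd j))
  refine ⟨2 * m + 4, fun k => covO m a b c d k.val, by omega, ?_⟩
  ext p
  simp only [Set.mem_iUnion, Set.mem_diff, Set.mem_univ, true_and, Set.mem_prod, Set.mem_Ioo]
  constructor
  · rintro ⟨k, hk⟩
    rintro ⟨i, ⟨hi1, hi2⟩, hi3, hi4⟩
    have hival := i.isLt
    obtain ⟨kv, hkv⟩ := k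
    rcases kv with _ | _ | _ | _ | j
    · simp only [covO, orthantSet, Ray.toSet, Set.mem_setOf_eq, Set.mem_Iic, Set.mem_univ,
        true_and] at hk
      have : c 0 ≤ c i := hC 0 i (by simp)
      linarith
    · simp only [covO, orthantSet, Ray.toSet, Set.mem_setOf_eq, Set.mem_Ici, Set.mem_univ,
        true_and] at hk
      have : d i ≤ d (Fin.last m) := hD i (Fin.last m) (by simp only [Fin.val_last]; omega)
      linarith
    · simp only [covO, orthantSet, Ray.toSet, Set.mem_setOf_eq, Set.mem_Iic, Set.mem_univ,
        and_true] at hk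
      have : a 0 ≤ a i := hA 0 i (by simp)
      linarith
    · simp only [covO, orthantSet, Ray.toSet, Set.mem_setOf_eq, Set.mem_Ici, Set.mem_univ,
        and_true] at hk
      have : b i ≤ b (Fin.last m) := hB i (Fin.last m) (by simp only [Fin.val_last]; omega)
      linarith
    · by_cases hpar : j % 2 = 0
      · simp only [covO, hpar, if_pos, orthantSet, Ray.toSet, Set.mem_setOf_eq, Set.mem_Iic,
          Set.mem_Ici, if_true] at hk
        rcases le_or_gt i.val (min (j / 2) m) with h | h
        · have : b i ≤ b (cidx m (j / 2)) := hB i _ (by simp only [cidx]; omega)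
          linarith [hk.1]
        · have : c (cidx m (j / 2 + 1)) ≤ c i := hC _ i (by simp only [cidx]; omega)
          linarith [hk.2]
      · simp only [covO, hpar, orthantSet, Ray.toSet, Set.mem_setOf_eq, Set.mem_Iic,
          Set.mem_Ici, if_false] at hk
        rcases le_or_gt (min (j / 2 + 1) m) i.val with h | h
        · have : a (cidx m (j / 2 + 1)) ≤ a i := hA _ i (by simp only [cidx]; omega)
          linarith [hk.1]
        · have : d i ≤ d (cidx m (j / 2)) := hD i _ (by simp only [cidx]; omega)
          linarith [hk.2]
  · intro hnp
    have key : ∀ i : Fin (m + 1), a i < p.1 → p.1 < b i → p.2 ≤ c i ∨ d i ≤ p.2 := by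
      intro i h1 h2
      by_contra hcon
      push_neg at hcon
      exact hnp ⟨i, ⟨h1, h2⟩, hcon.1, hcon.2⟩
    by_cases h0 : p.1 ≤ a 0
    · exact ⟨⟨2, by omega⟩, by
        simp only [covO, orthantSet, Ray.toSet, Set.mem_setOf_eq, Set.mem_Iic, Set.mem_univ,
          and_true]
        exact h0⟩
    by_cases hLast : b (Fin.last m) ≤ p.1
    · exact ⟨⟨3, by omega⟩, by
        simp only [covO, orthantSet, Ray.toSet, Set.mem_setOf_eq, Set.mem_Ici, Set.mem_univ,
          and_true]
        exact hLast⟩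
    push_neg at h0 hLast
    have hS : (Finset.univ.filter (fun i : Fin (m + 1) => a i < p.1)).Nonempty :=
      ⟨0, by simp [h0]⟩
    obtain ⟨i, hiS, hmax⟩ : ∃ i : Fin (m + 1), a i < p.1 ∧ ∀ j, a j < p.1 → j ≤ i := by
      refine ⟨(Finset.univ.filter (fun i : Fin (m + 1) => a i < p.1)).max' hS, ?_, ?_⟩
      · have := Finset.max'_mem _ hS
        simpa using this
      · intro j hj
        exact Finset.le_max' _ j (by simpa using hj)
    have hival := i.isLt
    have hnext : ∀ him : i.val < m, p.1 ≤ a ⟨i.val + 1, Nat.succ_lt_succ him⟩ := by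
      intro him
      by_contra hcon
      push_neg at hcon
      have := hmax ⟨i.val + 1, by omega⟩ hcon
      simp only [Fin.le_def] at this
      omega
    rcases lt_or_ge p.1 (b i) with hb1 | hb2
    · rcases key i hiS hb1 with hc | hd
      · rcases Nat.eq_zero_or_pos i.val with hz | hz
        · refine ⟨⟨0, by omega⟩, ?_⟩
          have hieq : i = 0 := Fin.ext (by simpa using hz)
          simp only [covO, orthantSet, Ray.toSet, Set.mem_setOf_eq, Set.mem_Iic, Set.mem_univ,
            true_and]
          rw [← hieq]
          exact hc
        · refine ⟨⟨2 * (i.val - 1) + 4, by omega⟩, ?_⟩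
          have e1 : 2 * (i.val - 1) % 2 = 0 := by omega
          have e2 : 2 * (i.val - 1) / 2 = i.val - 1 := by omega
          simp only [covO, e1, e2, if_true, orthantSet, Ray.toSet, Set.mem_setOf_eq,
            Set.mem_Iic, Set.mem_Ici]
          constructor
          · have h1 : (cidx m (i.val - 1)).val < i.val := by simp only [cidx]; omega
            exact le_of_lt (lt_of_le_of_lt (hba _ i h1) hiS)
          · have h1 : cidx m (i.val - 1 + 1) = i := Fin.ext (by simp only [cidx]; omega)
            rw [h1]
            exact hc
      · rcases Nat.lt_or_ge i.val m with him | him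
        · refine ⟨⟨2 * i.val + 5, by omega⟩, ?_⟩
          have e0 : 2 * i.val + 5 = (2 * i.val + 1) + 4 := by omega
          have e1 : ¬ ((2 * i.val + 1) % 2 = 0) := by omega
          have e2 : (2 * i.val + 1) / 2 = i.val := by omega
          simp only [e0, covO, e1, e2, if_false, orthantSet, Ray.toSet, Set.mem_setOf_eq,
            Set.mem_Iic, Set.mem_Ici]
          constructor
          · have h1 : cidx m (i.val + 1) = ⟨i.val + 1, by omega⟩ :=
              Fin.ext (by simp only [cidx]; omega)
            rw [h1]
            exact le_trans (le_of_lt hb1) (hstair1 i (by omega))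
          · have h1 : cidx m i.val = i := Fin.ext (by simp only [cidx]; omega)
            rw [h1]
            exact hd
        · refine ⟨⟨1, by omega⟩, ?_⟩
          simp only [covO, orthantSet, Ray.toSet, Set.mem_setOf_eq, Set.mem_Ici, Set.mem_univ,
            true_and]
          have hieq : Fin.last m = i := Fin.ext (by simp only [Fin.val_last]; omega)
          rw [hieq]
          exact hd
    · have him : i.val < m := by
        rcases Nat.lt_or_ge i.val m with h | h
        · exact h
        · exfalso
          have hieq : i = Fin.last m := Fin.ext (by simp only [Fin.val_last]; omega)
          rw [hieq] at hb2
          linarith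
      have hnx := hnext him
      by_cases hcc : p.2 ≤ c ⟨i.val + 1, by omega⟩
      · refine ⟨⟨2 * i.val + 4, by omega⟩, ?_⟩
        have e1 : 2 * i.val % 2 = 0 := by omega
        have e2 : 2 * i.val / 2 = i.val := by omega
        simp only [covO, e1, e2, if_true, orthantSet, Ray.toSet, Set.mem_setOf_eq,
          Set.mem_Iic, Set.mem_Ici]
        constructor
        · have h1 : cidx m i.val = i := Fin.ext (by simp only [cidx]; omega)
          rw [h1]
          exact hb2
        · have h1 : cidx m (i.val + 1) = ⟨i.val + 1, by omega⟩ :=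
            Fin.ext (by simp only [cidx]; omega)
          rw [h1]
          exact hcc
      · push_neg at hcc
        refine ⟨⟨2 * i.val + 5, by omega⟩, ?_⟩
        have e0 : 2 * i.val + 5 = (2 * i.val + 1) + 4 := by omega
        have e1 : ¬ ((2 * i.val + 1) % 2 = 0) := by omega
        have e2 : (2 * i.val + 1) / 2 = i.val := by omega
        simp only [e0, covO, e1, e2, if_false, orthantSet, Ray.toSet, Set.mem_setOf_eq,
          Set.mem_Iic, Set.mem_Ici]
        constructor
        · have h1 : cidx m (i.val + 1) = ⟨i.val + 1, by omega⟩ :=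
            Fin.ext (by simp only [cidx]; omega)
          rw [h1]
          exact hnx
        · have h1 : cidx m i.val = i := Fin.ext (by simp only [cidx]; omega)
          rw [h1]
          exact le_trans (hstair2 i (by omega)) (le_of_lt hcc)
end
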